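/- arXiv:1207.5420 — 7 statements merged into one kernel-verified Lean document; each statement's English description precedes it below -/
import Mathlib

section
/- Let K ⊆ 𝔖(A) be a section containing an element of full rank, U a finite set, M = (M_u)_{u∈U} a generalized POVM with respect to K, and p_u = s(M_u) for each u. Then M is an extreme point of the convex set M_K(A,U) of generalized POVMs if and only if for every family (D_u)_{u∈U} with D_u ∈ A^h_{p_u} = p_u A^h p_u for all u and ∑_{u∈U} D_u ∈ K^⊥, one has D_u = 0 for all u ∈ U. -/
open scoped ComplexOrder Kronecker

variable {m : Type*} [Fintype m] [DecidableEq m]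

/-- `p` is the support projection of `a` : the smallest orthogonal projection `p` with `p a = a`. -/
def IsSuppProj (a p : Matrix m m ℂ) : Prop :=
  p.IsHermitian ∧ p * p = p ∧ p * a = a ∧
    ∀ r : Matrix m m ℂ, r.IsHermitian → r * r = r → r * a = a → r * p = p

/-- The cone `Q = ⋃_{λ ≥ 0} λ K` generated by `K`. -/
def Qset (K : Set (Matrix m m ℂ)) : Set (Matrix m m ℂ) :=
  {x | ∃ t : ℝ, 0 ≤ t ∧ ∃ a ∈ K, x = t • a}

/-- The real subspace `J = Q - Q` generated by `K` (as a set). -/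
def Jset (K : Set (Matrix m m ℂ)) : Set (Matrix m m ℂ) :=
  {x | ∃ y ∈ Qset K, ∃ z ∈ Qset K, x = y - z}

/-- The set `M(K,U)` of affine maps from `K` into the probability simplex over `U`. -/
def MeasSet (K : Set (Matrix m m ℂ)) (U : Type*) [Fintype U] : Set (K → U → ℝ) :=
  {f | (∀ ρ, (∀ u, 0 ≤ f ρ u) ∧ ∑ u, f ρ u = 1) ∧
    ∀ (ρ₁ ρ₂ : K) (t : ℝ), 0 ≤ t → t ≤ 1 →
      ∀ h : t • (ρ₁ : Matrix m m ℂ) + (1 - t) • (ρ₂ : Matrix m m ℂ) ∈ K,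
        f ⟨_, h⟩ = t • f ρ₁ + (1 - t) • f ρ₂}

/-- The measurement induced by the (generalized) POVM `M` : `ρ ↦ (Tr (M_u ρ))_u`. -/
noncomputable def inducedMeas (K : Set (Matrix m m ℂ)) {U : Type*}
    (M : U → Matrix m m ℂ) : K → U → ℝ :=
  fun ρ u => ((M u * (ρ : Matrix m m ℂ)).trace).re

set_option linter.unusedSectionVars false
section Helpers
open Matrix Polynomial

lemma real_smul_mat (t : ℝ) (X : Matrix m m ℂ) : t • X = (t : ℂ) • X := by
  ext i j; simp [Complex.real_smul]

lemma psd_real_smul {t : ℝ} (ht : 0 ≤ t) {X : Matrix m m ℂ} (hX : X.PosSemidef) :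
    ((t : ℂ) • X).PosSemidef := by
  rw [posSemidef_iff_dotProduct_mulVec]
  constructor
  · show ((t:ℂ) • X)ᴴ = (t:ℂ) • X
    rw [conjTranspose_smul (t:ℂ) X, Complex.star_def, Complex.conj_ofReal, hX.1.eq]
  · intro x
    have h := hX.dotProduct_mulVec_nonneg x
    have he : star x ⬝ᵥ ((t:ℂ) • X) *ᵥ x = (t:ℂ) * (star x ⬝ᵥ X *ᵥ x) := by
      rw [Matrix.smul_mulVec, dotProduct_smul, smul_eq_mul]
    rw [he]
    rw [Complex.nonneg_iff] at h ⊢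
    constructor
    · simp only [Complex.mul_re, Complex.ofReal_re, Complex.ofReal_im, zero_mul, sub_zero]
      exact mul_nonneg ht h.1
    · simp [Complex.mul_im, ← h.2]

lemma psd_neg_eq_zero {X : Matrix m m ℂ} (h1 : X.PosSemidef) (h2 : (-X).PosSemidef) :
    X = 0 := by
  have hv : ∀ x, X *ᵥ x = 0 := by
    intro x
    refine (h1.dotProduct_mulVec_zero_iff x).mp (le_antisymm ?_ (h1.dotProduct_mulVec_nonneg x))
    have h := h2.dotProduct_mulVec_nonneg x
    rw [neg_mulVec, dotProduct_neg] at h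
    exact neg_nonneg.mp h
  ext i j
  have := congrFun (hv (Pi.single j 1)) i
  simpa [Matrix.mulVec_single] using this

lemma psd_kill {N q : Matrix m m ℂ} (hN : N.PosSemidef) (hq : q.IsHermitian)
    (h : q * N * q = 0) : q * N = 0 ∧ N * q = 0 := by
  obtain ⟨B, hB⟩ : ∃ B : Matrix m m ℂ, N = Bᴴ * B := by
    open scoped MatrixOrder in exact CStarAlgebra.nonneg_iff_eq_star_mul_self.mp hN.nonneg
  have h2 : (B * q)ᴴ * (B * q) = 0 := by
    rw [conjTranspose_mul, hq.eq]
    calc q * Bᴴ * (B * q) = q * (Bᴴ * B) * q := by noncomm_ring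
    _ = 0 := by rw [← hB, h]
  have h3 : B * q = 0 := conjTranspose_mul_self_eq_zero.mp h2
  have h4 : N * q = 0 := by rw [hB, mul_assoc, h3, mul_zero]
  have h5 : q * N = 0 := by
    have := congrArg conjTranspose h4
    rwa [conjTranspose_mul, hq.eq, hN.1.eq, conjTranspose_zero] at this
  exact ⟨h5, h4⟩

lemma isSuppProj_unique {a p r : Matrix m m ℂ} (hp : IsSuppProj a p) (hr : IsSuppProj a r) :
    p = r := by
  have h1 : r * p = p := hp.2.2.2 r hr.1 hr.2.1 hr.2.2.1
  have h2 : p * r = r := hr.2.2.2 p hp.1 hp.2.1 hp.2.2.1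
  have := congrArg conjTranspose h1
  rw [conjTranspose_mul, hp.1.eq, hr.1.eq] at this
  rw [← this, h2]

lemma aux_aeval_conj (V X : Matrix m m ℂ) (h1 : V * Vᴴ = 1) (h2 : Vᴴ * V = 1) (f : ℂ[X]) :
    aeval (V * X * Vᴴ) f = V * aeval X f * Vᴴ := by
  let φ : Matrix m m ℂ →ₐ[ℂ] Matrix m m ℂ :=
    { toFun := fun Y => V * Y * Vᴴ
      map_one' := by simpa using h1
      map_mul' := fun Y Z => by
        calc V * (Y * Z) * Vᴴ = V * Y * (Vᴴ * V) * Z * Vᴴ := by rw [h2]; noncomm_ring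
        _ = V * Y * Vᴴ * (V * Z * Vᴴ) := by noncomm_ring
      map_zero' := by simp
      map_add' := fun Y Z => by noncomm_ring
      commutes' := fun c => by
        simp [Algebra.algebraMap_eq_smul_one, Matrix.smul_mul, Matrix.mul_smul, h1] }
  exact aeval_algHom_apply φ X f

lemma aux_aeval_diagonal (d : m → ℂ) (f : ℂ[X]) :
    aeval (diagonal d) f = diagonal (fun i => f.eval (d i)) := by
  have h := aeval_algHom_apply (Matrix.diagonalAlgHom (n := m) (α := ℂ) ℂ) d f
  rw [Matrix.diagonalAlgHom_apply] at h
  have hfun : (aeval d f : m → ℂ) = fun i => f.eval (d i) := by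
    funext i
    have h2 := aeval_algHom_apply (Pi.evalAlgHom ℂ (fun _ : m => ℂ) i) d f
    simp only [Pi.evalAlgHom_apply] at h2
    rw [← h2, Polynomial.coe_aeval_eq_eval]
  rw [h, Matrix.diagonalAlgHom_apply, hfun]

lemma herm_bound {x : Matrix m m ℂ} (hx : x.IsHermitian) :
    ∃ c : ℝ, 0 < c ∧ ((c:ℂ) • 1 + x).PosSemidef ∧ ((c:ℂ) • 1 - x).PosSemidef := by
  set ev := hx.eigenvalues with hev
  set V : Matrix m m ℂ := (hx.eigenvectorUnitary : Matrix m m ℂ) with hV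
  have hV1 : V * Vᴴ = 1 := by
    have := Matrix.mem_unitaryGroup_iff.mp hx.eigenvectorUnitary.2
    simpa [Matrix.star_eq_conjTranspose] using this
  have hV2 : Vᴴ * V = 1 := by
    have := Matrix.mem_unitaryGroup_iff'.mp hx.eigenvectorUnitary.2
    simpa [Matrix.star_eq_conjTranspose] using this
  have hspec : x = V * diagonal (fun i => ((ev i : ℝ) : ℂ)) * Vᴴ := by
    have := hx.spectral_theorem
    simpa [Matrix.star_eq_conjTranspose, Function.comp_def] using this
  set c : ℝ := 1 + ∑ i, |ev i| with hc
  have hcpos : 0 < c := by positivity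
  have hbound : ∀ i, |ev i| ≤ c - 1 := by
    intro i
    have : |ev i| ≤ ∑ j, |ev j| :=
      Finset.single_le_sum (fun j _ => abs_nonneg (ev j)) (Finset.mem_univ i)
    simpa [hc] using this
  have hdiag : ∀ (s : ℝ) (hs : s = 1 ∨ s = -1),
      ((c:ℂ) • 1 + (s:ℂ) • x).PosSemidef := by
    intro s hs
    have hsmulc : ∀ (a : ℂ) (Y : Matrix m m ℂ), V * (a • Y) * Vᴴ = a • (V * Y * Vᴴ) := by
      intro a Y
      rw [Matrix.mul_smul, Matrix.smul_mul]
    have e1 : V * ((c:ℂ) • 1) * Vᴴ = (c:ℂ) • (1 : Matrix m m ℂ) := by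
      rw [hsmulc, Matrix.mul_one, hV1]
    have e2 : V * ((s:ℂ) • diagonal (fun i => ((ev i : ℝ) : ℂ))) * Vᴴ = (s:ℂ) • x := by
      rw [hsmulc, ← hspec]
    have key : (c:ℂ) • 1 + (s:ℂ) • x
        = V * ((c:ℂ) • 1 + (s:ℂ) • diagonal (fun i => ((ev i : ℝ) : ℂ))) * Vᴴ := by
      rw [Matrix.mul_add, Matrix.add_mul, e1, e2]
    have inner : ((c:ℂ) • 1 + (s:ℂ) • diagonal (fun i => ((ev i : ℝ) : ℂ)) : Matrix m m ℂ)
        = diagonal (fun i => ((c + s * ev i : ℝ) : ℂ)) := by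
      rw [← Matrix.diagonal_one, ← Matrix.diagonal_smul, ← Matrix.diagonal_smul,
        Matrix.diagonal_add]
      congr 1
      funext i
      simp only [Pi.add_apply, Pi.smul_apply, smul_eq_mul, mul_one]
      push_cast
      ring
    rw [key, inner]
    refine PosSemidef.mul_mul_conjTranspose_same ?_ V
    refine Matrix.posSemidef_diagonal_iff.mpr fun i => ?_
    rw [Complex.zero_le_real]
    rcases hs with rfl | rfl
    · have := hbound i
      have := abs_le.mp (hbound i)
      nlinarith
    · have := abs_le.mp (hbound i)
      nlinarith
  refine ⟨c, hcpos, ?_, ?_⟩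
  · have := hdiag 1 (Or.inl rfl)
    simpa using this
  · have := hdiag (-1) (Or.inr rfl)
    have h' : ((-1 : ℝ) : ℂ) • x = -x := by push_cast; simp
    rw [h'] at this
    simpa [sub_eq_add_neg] using this

lemma suppProj_data {M : Matrix m m ℂ} (hM : M.PosSemidef) :
    ∃ (P : Matrix m m ℂ) (f : ℂ[X]) (δ : ℝ),
      IsSuppProj M P ∧ P = aeval M f ∧ 0 < δ ∧ (M - (δ:ℂ) • P).PosSemidef := by
  have hH := hM.1
  set ev := hH.eigenvalues with hev
  set V : Matrix m m ℂ := (hH.eigenvectorUnitary : Matrix m m ℂ) with hV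
  have hV1 : V * Vᴴ = 1 := by
    have := Matrix.mem_unitaryGroup_iff.mp hH.eigenvectorUnitary.2
    simpa [Matrix.star_eq_conjTranspose] using this
  have hV2 : Vᴴ * V = 1 := by
    have := Matrix.mem_unitaryGroup_iff'.mp hH.eigenvectorUnitary.2
    simpa [Matrix.star_eq_conjTranspose] using this
  have hspec : M = V * diagonal (fun i => ((ev i : ℝ) : ℂ)) * Vᴴ := by
    have := hH.spectral_theorem
    simpa [Matrix.star_eq_conjTranspose, Function.comp_def] using this
  set χ : m → ℂ := fun i => if ev i = 0 then 0 else 1 with hχ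
  set P := V * diagonal χ * Vᴴ with hP
  -- interpolation polynomial
  set s : Finset ℂ := insert 0 (Finset.image (fun i => ((ev i : ℝ) : ℂ)) Finset.univ) with hs
  set r : ℂ → ℂ := fun t => if t = 0 then 0 else 1 with hr
  set f : ℂ[X] := Lagrange.interpolate s id r with hf
  have hnode : ∀ t ∈ s, f.eval t = r t := by
    intro t ht
    exact Lagrange.eval_interpolate_at_node r (Set.injOn_id _) ht
  have hf0 : f.eval 0 = 0 := by
    have := hnode 0 (Finset.mem_insert_self 0 _)
    simpa [hr] using this
  have hdiagfun : (fun i => f.eval ((ev i : ℝ) : ℂ)) = χ := by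
    funext i
    have hmem : ((ev i : ℝ) : ℂ) ∈ s :=
      Finset.mem_insert_of_mem (Finset.mem_image_of_mem _ (Finset.mem_univ i))
    rw [hnode _ hmem]
    by_cases h : ev i = 0 <;> simp [hr, hχ, h, Complex.ofReal_eq_zero]
  have hPf : P = aeval M f := by
    conv_rhs => rw [hspec]
    rw [aux_aeval_conj _ _ hV1 hV2, aux_aeval_diagonal, hdiagfun]
  -- projection facts
  have hPH : P.IsHermitian := by
    show Pᴴ = P
    rw [hP, conjTranspose_mul, conjTranspose_mul, conjTranspose_conjTranspose,
      diagonal_conjTranspose]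
    have hst : star χ = χ := by
      funext i; by_cases h : ev i = 0 <;> simp [hχ, h]
    rw [hst, mul_assoc]
  have hconjmul : ∀ d₁ d₂ : m → ℂ,
      (V * diagonal d₁ * Vᴴ) * (V * diagonal d₂ * Vᴴ)
        = V * diagonal (fun i => d₁ i * d₂ i) * Vᴴ := by
    intro d₁ d₂
    calc (V * diagonal d₁ * Vᴴ) * (V * diagonal d₂ * Vᴴ)
        = V * diagonal d₁ * (Vᴴ * V) * diagonal d₂ * Vᴴ := by noncomm_ring
    _ = V * (diagonal d₁ * diagonal d₂) * Vᴴ := by rw [hV2]; noncomm_ring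
    _ = V * diagonal (fun i => d₁ i * d₂ i) * Vᴴ := by rw [diagonal_mul_diagonal]
  have hPP : P * P = P := by
    rw [hP, hconjmul]
    have : (fun i => χ i * χ i) = χ := by
      funext i
      by_cases h : ev i = 0 <;> simp [hχ, h]
    rw [this]
  have hPM : P * M = M := by
    conv_lhs => rw [hP, hspec]
    conv_rhs => rw [hspec]
    rw [hconjmul]
    have : (fun i => χ i * ((ev i : ℝ) : ℂ)) = fun i => ((ev i : ℝ) : ℂ) := by
      funext i
      by_cases h : ev i = 0 <;> simp [hχ, h]
    rw [this]
  have hmin : ∀ q : Matrix m m ℂ, q.IsHermitian → q * q = q → q * M = M → q * P = P := by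
    intro q _ _ hqM
    obtain ⟨g, hg⟩ : (X : ℂ[X]) ∣ f := by
      rw [Polynomial.X_dvd_iff, Polynomial.coeff_zero_eq_eval_zero]
      exact hf0
    rw [hPf, hg, _root_.map_mul, Polynomial.aeval_X, ← mul_assoc, hqM]
  -- δ
  set S : Finset ℝ := (Finset.univ.filter fun i => ev i ≠ 0).image ev with hS
  by_cases hSne : S.Nonempty
  case neg =>
    -- all eigenvalues zero, so P could be anything but χ = 0... M = 0 case
    have hall : ∀ i, ev i = 0 := by
      intro i
      by_contra h
      exact hSne ⟨ev i, Finset.mem_image_of_mem _ (Finset.mem_filter.mpr ⟨Finset.mem_univ i, h⟩)⟩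
    refine ⟨P, f, 1, ⟨hPH, hPP, hPM, hmin⟩, hPf, one_pos, ?_⟩
    have : P = 0 := by
      rw [hP]
      have : χ = fun _ => (0:ℂ) := by funext i; simp [hχ, hall i]
      rw [this]
      simp [Matrix.diagonal_zero]
    rw [this]
    simpa using hM
  case pos =>
    set δ := S.min' hSne with hδ
    have hδS : δ ∈ S := S.min'_mem hSne
    obtain ⟨i0, hi0, hevi0⟩ := Finset.mem_image.mp hδS
    have hi0ne : ev i0 ≠ 0 := (Finset.mem_filter.mp hi0).2
    have hδpos : 0 < δ := by
      rw [← hevi0]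
      exact lt_of_le_of_ne (hM.eigenvalues_nonneg i0) (Ne.symm hi0ne)
    refine ⟨P, f, δ, ⟨hPH, hPP, hPM, hmin⟩, hPf, hδpos, ?_⟩
    have hsmulc : ∀ (a : ℂ) (Y : Matrix m m ℂ), V * (a • Y) * Vᴴ = a • (V * Y * Vᴴ) := by
      intro a Y
      rw [Matrix.mul_smul, Matrix.smul_mul]
    have e2 : V * ((δ:ℂ) • diagonal χ) * Vᴴ = (δ:ℂ) • P := by
      rw [hsmulc, hP]
    have key : M - (δ:ℂ) • P
        = V * (diagonal (fun i => ((ev i : ℝ) : ℂ)) - (δ:ℂ) • diagonal χ) * Vᴴ := by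
      rw [Matrix.mul_sub, Matrix.sub_mul, e2]
      conv_lhs => rw [hspec]
    have inner : (diagonal (fun i => ((ev i : ℝ) : ℂ)) - (δ:ℂ) • diagonal χ : Matrix m m ℂ)
        = diagonal (fun i => ((ev i : ℝ) : ℂ) - (δ:ℂ) * χ i) := by
      rw [← Matrix.diagonal_smul, Matrix.diagonal_sub]
      congr 1
    rw [key, inner]
    refine PosSemidef.mul_mul_conjTranspose_same ?_ V
    refine Matrix.posSemidef_diagonal_iff.mpr fun i => ?_
    by_cases h : ev i = 0
    · simp [hχ, h]
    · have hle : δ ≤ ev i :=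
        S.min'_le _ (Finset.mem_image_of_mem _ (Finset.mem_filter.mpr ⟨Finset.mem_univ i, h⟩))
      have : ((ev i : ℝ) : ℂ) - (δ:ℂ) * χ i = ((ev i - δ : ℝ) : ℂ) := by
        simp [hχ, h]
      rw [this, Complex.zero_le_real]
      linarith

lemma suppProj_props {M P : Matrix m m ℂ} (hM : M.PosSemidef) (hp : IsSuppProj M P) :
    (∃ f : ℂ[X], P = aeval M f) ∧ ∃ δ : ℝ, 0 < δ ∧ (M - (δ:ℂ) • P).PosSemidef := by
  obtain ⟨P', f, δ, h1, h2, h3, h4⟩ := suppProj_data hM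
  obtain rfl : P = P' := isSuppProj_unique hp h1
  exact ⟨⟨f, h2⟩, δ, h3, h4⟩

end Helpers

variable {n : ℕ} (A : StarSubalgebra ℂ (Matrix (Fin n) (Fin n) ℂ))

/-- The state space `𝔖(A)` of `A`. -/
def States : Set (Matrix (Fin n) (Fin n) ℂ) :=
  {ρ | ρ ∈ A ∧ ρ.PosSemidef ∧ ρ.trace = 1}

/-- The annihilator `K^⊥` of `K` in the selfadjoint part of `A`. -/
def Kperp (K : Set (Matrix (Fin n) (Fin n) ℂ)) : Set (Matrix (Fin n) (Fin n) ℂ) :=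
  {x | x ∈ A ∧ x.IsHermitian ∧ ∀ a ∈ K, (a * x).trace = 0}

/-- The set `(a + K^⊥)⁺` of positive elements of `A` in the coset `a + K^⊥`. -/
def posCoset (K : Set (Matrix (Fin n) (Fin n) ℂ)) (a : Matrix (Fin n) (Fin n) ℂ) :
    Set (Matrix (Fin n) (Fin n) ℂ) :=
  {b | b ∈ A ∧ b.PosSemidef ∧ b - a ∈ Kperp A K}

/-- `p` is the `K`-support `s_K(a)` of `a`: the largest support projection of
elements of `(a+K^⊥)⁺`. -/
def IsKSupp (K : Set (Matrix (Fin n) (Fin n) ℂ)) (a p : Matrix (Fin n) (Fin n) ℂ) : Prop :=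
  (∃ b ∈ posCoset A K a, IsSuppProj b p) ∧
    ∀ b ∈ posCoset A K a, ∀ r, IsSuppProj b r → p * r = r

/-- Membership in `P_K(A) = {I - s(b) : b ∈ Q}`. -/
def memPK (K : Set (Matrix (Fin n) (Fin n) ℂ)) (p : Matrix (Fin n) (Fin n) ℂ) : Prop :=
  ∃ b ∈ Qset K, ∃ r, IsSuppProj b r ∧ p = 1 - r

/-- The set of generalized POVMs with respect to `K`, with outcomes in `U`. -/
def GPOVMs (K : Set (Matrix (Fin n) (Fin n) ℂ)) (U : Type*) [Fintype U] :
    Set (U → Matrix (Fin n) (Fin n) ℂ) :=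
  {N | (∀ u, N u ∈ A ∧ (N u).PosSemidef) ∧ (∑ u, N u) - 1 ∈ Kperp A K}


section KperpLemmas
open Matrix
variable {n : ℕ} (A : StarSubalgebra ℂ (Matrix (Fin n) (Fin n) ℂ))

lemma Kperp_add {K : Set (Matrix (Fin n) (Fin n) ℂ)} {x y : Matrix (Fin n) (Fin n) ℂ}
    (hx : x ∈ Kperp A K) (hy : y ∈ Kperp A K) : x + y ∈ Kperp A K :=
  ⟨add_mem hx.1 hy.1, hx.2.1.add hy.2.1, fun a ha => by
    rw [mul_add, trace_add, hx.2.2 a ha, hy.2.2 a ha, add_zero]⟩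

lemma Kperp_sub {K : Set (Matrix (Fin n) (Fin n) ℂ)} {x y : Matrix (Fin n) (Fin n) ℂ}
    (hx : x ∈ Kperp A K) (hy : y ∈ Kperp A K) : x - y ∈ Kperp A K :=
  ⟨sub_mem hx.1 hy.1, hx.2.1.sub hy.2.1, fun a ha => by
    rw [mul_sub, trace_sub, hx.2.2 a ha, hy.2.2 a ha, sub_zero]⟩

lemma Kperp_smul {K : Set (Matrix (Fin n) (Fin n) ℂ)} (t : ℝ) {x : Matrix (Fin n) (Fin n) ℂ}
    (hx : x ∈ Kperp A K) : (t : ℂ) • x ∈ Kperp A K := by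
  refine ⟨SMulMemClass.smul_mem _ hx.1, ?_, fun a ha => by
    rw [mul_smul_comm, trace_smul, hx.2.2 a ha, smul_zero]⟩
  show ((t:ℂ) • x)ᴴ = (t:ℂ) • x
  rw [conjTranspose_smul (t:ℂ) x, Complex.star_def, Complex.conj_ofReal, hx.2.1.eq]

end KperpLemmas

/-- Let `K` be a section of `𝔖(A)` containing a full-rank element, and `M` a
generalized POVM with support projections `p u`. Then `M` is extremal among generalized POVMs
iff for every family `D` with `D u ∈ p_u A^h p_u` and `∑ D u ∈ K^⊥` one has `D u = 0`. -/
theorem gPOVM_extreme_iff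
    (K : Set (Matrix (Fin n) (Fin n) ℂ))
    (hKsub : K ⊆ States A) (hKconv : Convex ℝ K) (hKcl : IsClosed K)
    (hKsec : K = Jset K ∩ States A)
    (hfull : ∃ ρ ∈ K, ρ.PosDef)
    (U : Type) [Fintype U]
    (M : U → Matrix (Fin n) (Fin n) ℂ) (hM : M ∈ GPOVMs A K U)
    (p : U → Matrix (Fin n) (Fin n) ℂ) (hp : ∀ u, IsSuppProj (M u) (p u)) :
    M ∈ (GPOVMs A K U).extremePoints ℝ ↔
      ∀ D : U → Matrix (Fin n) (Fin n) ℂ,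
        (∀ u, ∃ x, x ∈ A ∧ x.IsHermitian ∧ D u = p u * x * p u) →
        (∑ u, D u) ∈ Kperp A K →
        ∀ u, D u = 0 := by
  classical
  rw [mem_extremePoints]
  constructor
  · -- extreme point → rigidity
    rintro ⟨-, hext⟩ D hD hDsum u0
    choose x hxA hxH hDx using hD
    have hMpsd : ∀ w, (M w).PosSemidef := fun w => (hM.1 w).2
    have hprops := fun w => suppProj_props (hMpsd w) (hp w)
    choose f hf using fun w => (hprops w).1
    choose δ hδpos hδpsd using fun w => (hprops w).2
    choose c hcpos hcplus hcminus using fun w => herm_bound (hxH w)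
    have hpA : ∀ w, p w ∈ A := by
      intro w
      have hmem : ∀ g : Polynomial ℂ, Polynomial.aeval (M w) g ∈ A := by
        intro g
        induction g using Polynomial.induction_on' with
        | add r s hr hs => rw [map_add]; exact add_mem hr hs
        | monomial k a =>
          rw [Polynomial.aeval_monomial]
          exact mul_mem (StarSubalgebra.algebraMap_mem A a) (pow_mem (hM.1 w).1 k)
      rw [hf w]
      exact hmem (f w)
    have hDA : ∀ w, D w ∈ A := fun w => by
      rw [hDx w]; exact mul_mem (mul_mem (hpA w) (hxA w)) (hpA w)
    -- a uniform ε
    set ε : ℝ := Finset.univ.inf' ⟨u0, Finset.mem_univ u0⟩ (fun w => δ w / c w) with hε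
    have hεpos : 0 < ε := by
      rw [hε]
      exact (Finset.lt_inf'_iff _).mpr fun w _ => div_pos (hδpos w) (hcpos w)
    have hεle : ∀ w, ε * c w ≤ δ w := by
      intro w
      have h1 : ε ≤ δ w / c w := Finset.inf'_le _ (Finset.mem_univ w)
      calc ε * c w ≤ (δ w / c w) * c w := mul_le_mul_of_nonneg_right h1 (hcpos w).le
      _ = δ w := div_mul_cancel₀ _ (ne_of_gt (hcpos w))
    have main : ∀ w (y : Matrix (Fin n) (Fin n) ℂ), ((c w : ℂ) • 1 + y).PosSemidef →
        (M w + (ε:ℂ) • (p w * y * p w)).PosSemidef := by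
      intro w y hy
      have hpp := (hp w).2.1
      have hpherm := (hp w).1
      have e1 : M w + (ε:ℂ) • (p w * y * p w)
          = (M w - (δ w : ℂ) • p w)
            + p w * (((δ w - ε * c w : ℝ) : ℂ) • 1 + (ε:ℂ) • ((c w : ℂ) • 1 + y)) * p w := by
        have expand : p w * (((δ w - ε * c w : ℝ) : ℂ) • 1 + (ε:ℂ) • ((c w : ℂ) • 1 + y)) * p w
            = ((δ w - ε * c w : ℝ) : ℂ) • p w + ((ε * c w : ℝ) : ℂ) • p w
              + (ε:ℂ) • (p w * y * p w) := by
          simp only [Matrix.mul_add, Matrix.add_mul, Matrix.mul_smul, Matrix.smul_mul,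
            Matrix.mul_one, smul_add, smul_smul, hpp, Matrix.mul_assoc]
          push_cast
          module
        rw [expand]
        push_cast
        module
      rw [e1]
      refine (hδpsd w).add ?_
      have hnn : (0:ℝ) ≤ δ w - ε * c w := sub_nonneg.mpr (hεle w)
      have hZ : ((((δ w - ε * c w : ℝ)) : ℂ) • 1
          + (ε:ℂ) • ((c w : ℂ) • 1 + y) : Matrix (Fin n) (Fin n) ℂ).PosSemidef :=
        (psd_real_smul hnn Matrix.PosSemidef.one).add (psd_real_smul hεpos.le hy)
      have h2 := hZ.mul_mul_conjTranspose_same (B := p w)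
      rwa [hpherm.eq] at h2
    set N₁ : U → Matrix (Fin n) (Fin n) ℂ := fun w => M w + (ε:ℂ) • D w with hN₁
    set N₂ : U → Matrix (Fin n) (Fin n) ℂ := fun w => M w - (ε:ℂ) • D w with hN₂
    have hN₁psd : ∀ w, (N₁ w).PosSemidef := by
      intro w
      show (M w + (ε:ℂ) • D w).PosSemidef
      rw [hDx w]
      exact main w (x w) (hcplus w)
    have hN₂psd : ∀ w, (N₂ w).PosSemidef := by
      intro w
      show (M w - (ε:ℂ) • D w).PosSemidef
      have hneg : p w * (-(x w)) * p w = -(p w * x w * p w) := by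
        rw [Matrix.mul_neg, Matrix.neg_mul]
      have : M w - (ε:ℂ) • D w = M w + (ε:ℂ) • (p w * (-(x w)) * p w) := by
        rw [hneg, hDx w, smul_neg, sub_eq_add_neg]
      rw [this]
      refine main w (-(x w)) ?_
      have := hcminus w
      rwa [sub_eq_add_neg] at this
    have hN₁mem : N₁ ∈ GPOVMs A K U := by
      refine ⟨fun w => ⟨add_mem (hM.1 w).1 (SMulMemClass.smul_mem _ (hDA w)), hN₁psd w⟩, ?_⟩
      have hsum1 : (∑ w, N₁ w) - 1 = ((∑ w, M w) - 1) + (ε:ℂ) • (∑ w, D w) := by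
        show (∑ w, (M w + (ε:ℂ) • D w)) - 1 = _
        rw [Finset.sum_add_distrib, ← Finset.smul_sum]
        abel
      rw [hsum1]
      exact Kperp_add A hM.2 (Kperp_smul A ε hDsum)
    have hN₂mem : N₂ ∈ GPOVMs A K U := by
      refine ⟨fun w => ⟨sub_mem (hM.1 w).1 (SMulMemClass.smul_mem _ (hDA w)), hN₂psd w⟩, ?_⟩
      have hsum2 : (∑ w, N₂ w) - 1 = ((∑ w, M w) - 1) - (ε:ℂ) • (∑ w, D w) := by
        show (∑ w, (M w - (ε:ℂ) • D w)) - 1 = _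
        rw [Finset.sum_sub_distrib, ← Finset.smul_sum]
        abel
      rw [hsum2]
      exact Kperp_sub A hM.2 (Kperp_smul A ε hDsum)
    have hseg : M ∈ openSegment ℝ N₁ N₂ := by
      refine ⟨1/2, 1/2, by norm_num, by norm_num, by norm_num, ?_⟩
      funext w
      simp only [Pi.add_apply, Pi.smul_apply]
      show (1/2 : ℝ) • (M w + (ε:ℂ) • D w) + (1/2 : ℝ) • (M w - (ε:ℂ) • D w) = M w
      rw [real_smul_mat, real_smul_mat]
      push_cast
      module
    obtain ⟨hN₁eq, -⟩ := hext N₁ hN₁mem N₂ hN₂mem hseg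
    have h0 : M u0 + (ε:ℂ) • D u0 = M u0 := congrFun hN₁eq u0
    have h1 : (ε:ℂ) • D u0 = 0 := by
      have := add_eq_left.mp h0
      exact this
    rcases smul_eq_zero.mp h1 with h | h
    · exact absurd h (by exact_mod_cast ne_of_gt hεpos)
    · exact h
  · -- rigidity → extreme point
    intro hrig
    refine ⟨hM, ?_⟩
    rintro N₁ hN₁ N₂ hN₂ ⟨a, b, ha, hb, hab, hsum⟩
    have hkey : ∀ w, (p w * N₁ w * p w = N₁ w) ∧ (p w * N₂ w * p w = N₂ w) := by
      intro w
      set q : Matrix (Fin n) (Fin n) ℂ := 1 - p w with hq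
      have hqherm : q.IsHermitian := Matrix.isHermitian_one.sub (hp w).1
      have hqM : q * M w = 0 := by
        rw [hq, Matrix.sub_mul, Matrix.one_mul, (hp w).2.2.1, sub_self]
      have hMw : a • N₁ w + b • N₂ w = M w := by
        have := congrFun hsum w
        simpa using this
      have step : ∀ (s t : ℝ), 0 < s → 0 < t →
          ∀ (Na Nb : Matrix (Fin n) (Fin n) ℂ), Na.PosSemidef → Nb.PosSemidef →
          s • Na + t • Nb = M w → p w * Na * p w = Na := by
        intro s t hs ht Na Nb hNa hNb hE
        have hE' : (s:ℂ) • Na + (t:ℂ) • Nb = M w := by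
          rw [← real_smul_mat, ← real_smul_mat]; exact hE
        have hsplit : (s:ℂ) • (q * Na * q) + (t:ℂ) • (q * Nb * q) = 0 := by
          have : q * ((s:ℂ) • Na + (t:ℂ) • Nb) * q = q * M w * q := by rw [hE']
          rw [hqM, Matrix.zero_mul] at this
          rw [← this]
          simp only [Matrix.mul_add, Matrix.add_mul, Matrix.mul_smul, Matrix.smul_mul]
        have hNaq : (q * Na * q).PosSemidef := by
          have := hNa.conjTranspose_mul_mul_same (B := q)
          rwa [hqherm.eq] at this
        have hNbq : (q * Nb * q).PosSemidef := by
          have := hNb.conjTranspose_mul_mul_same (B := q)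
          rwa [hqherm.eq] at this
        have hXzero : (s:ℂ) • (q * Na * q) = 0 := by
          refine psd_neg_eq_zero (psd_real_smul hs.le hNaq) ?_
          have hneg : -((s:ℂ) • (q * Na * q)) = (t:ℂ) • (q * Nb * q) :=
            neg_eq_of_add_eq_zero_right hsplit
          rw [hneg]
          exact psd_real_smul ht.le hNbq
        have hqNaq : q * Na * q = 0 := by
          rcases smul_eq_zero.mp hXzero with h | h
          · exact absurd h (by exact_mod_cast ne_of_gt hs)
          · exact h
        obtain ⟨hqNa, hNaq'⟩ := psd_kill hNa hqherm hqNaq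
        have hpq : p w = 1 - q := by rw [hq, sub_sub_cancel]
        rw [hpq, Matrix.sub_mul, Matrix.one_mul, hqNa, sub_zero, Matrix.mul_sub,
          Matrix.mul_one, hNaq', sub_zero]
      exact ⟨step a b ha hb _ _ (hN₁.1 w).2 (hN₂.1 w).2 hMw,
        step b a hb ha _ _ (hN₂.1 w).2 (hN₁.1 w).2 (by rw [add_comm]; exact hMw)⟩
    have hDzero := hrig (fun w => N₁ w - N₂ w)
      (fun w => ⟨N₁ w - N₂ w, sub_mem (hN₁.1 w).1 (hN₂.1 w).1,
        ((hN₁.1 w).2.isHermitian).sub ((hN₂.1 w).2.isHermitian), by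
          rw [Matrix.mul_sub, Matrix.sub_mul, (hkey w).1, (hkey w).2]⟩)
      (by
        have : (∑ w, (N₁ w - N₂ w)) = ((∑ w, N₁ w) - 1) - ((∑ w, N₂ w) - 1) := by
          rw [Finset.sum_sub_distrib, sub_sub_sub_cancel_right]
        rw [this]
        exact Kperp_sub A hN₁.2 hN₂.2)
    have hN12 : N₁ = N₂ := funext fun w => sub_eq_zero.mp (hDzero w)
    have hN₁M : N₁ = M := by
      calc N₁ = (1:ℝ) • N₁ := (one_smul ℝ N₁).symm
      _ = (a + b) • N₁ := by rw [hab]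
      _ = a • N₁ + b • N₁ := add_smul a b N₁
      _ = a • N₁ + b • N₂ := by rw [← hN12]
      _ = M := hsum
    exact ⟨hN₁M, hN12 ▸ hN₁M⟩
end

section
/- Let K ⊆ 𝔖(A) be a section containing an element of full rank, U a finite set, M = (M_u)_{u∈U} a generalized POVM with respect to K, and for each u let s_u = s_K(M_u) be the K-support of M_u. If the induced measurement m: K → P(U), m(ρ)(u) = Tr(M_u ρ), is an extreme point of the convex set M(K,U) of all affine maps from K to P(U), then ∑_{u∈U} dim_ℝ(s_u J s_u) ≤ dim_ℝ(J), where s_u J s_u = {s_u x s_u : x ∈ J}. -/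
open scoped ComplexOrder Kronecker

variable {m : Type*} [Fintype m] [DecidableEq m]

variable {n : ℕ} (A : StarSubalgebra ℂ (Matrix (Fin n) (Fin n) ℂ))

set_option linter.unusedSectionVars false
set_option linter.unusedVariables false
set_option maxHeartbeats 1600000

namespace POVMAux

open Matrix Complex

variable {m : Type*} [Fintype m] [DecidableEq m]

lemma real_smul_herm {x : Matrix m m ℂ} (hx : x.IsHermitian) (r : ℝ) :
    (r • x).IsHermitian := by
  rw [Matrix.IsHermitian, conjTranspose_smul, star_trivial, hx.eq]

lemma posSemidef_real_smul {P : Matrix m m ℂ} (hP : P.PosSemidef) {δ : ℝ} (hδ : 0 ≤ δ) :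
    (δ • P).PosSemidef := by
  refine Matrix.posSemidef_iff_dotProduct_mulVec.mpr ⟨real_smul_herm hP.1 δ, fun x => ?_⟩
  rw [smul_mulVec, dotProduct_smul]
  have h0 : (0:ℂ) ≤ (δ:ℂ) := by exact_mod_cast Complex.zero_le_real.mpr hδ
  have := hP.dotProduct_mulVec_nonneg x
  calc (0:ℂ) = (δ:ℂ) * 0 := by ring
  _ ≤ (δ:ℂ) * (star x ⬝ᵥ P *ᵥ x) := by
      exact mul_le_mul_of_nonneg_left this h0
  _ = δ • (star x ⬝ᵥ P *ᵥ x) := by rw [Complex.real_smul]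

lemma diag_nonneg {P : Matrix m m ℂ} (hP : P.PosSemidef) (i : m) : 0 ≤ P i i := by
  have h := hP.dotProduct_mulVec_nonneg (Pi.single i 1)
  simpa [dotProduct, mulVec, Pi.single_apply, Finset.sum_ite_eq, Finset.sum_ite_eq',
    mul_comm] using h

lemma trace_re_nonneg {P : Matrix m m ℂ} (hP : P.PosSemidef) : 0 ≤ (P.trace).re := by
  rw [Matrix.trace, Complex.re_sum]
  exact Finset.sum_nonneg fun i _ => (Complex.le_def.mp (diag_nonneg hP i)).1

lemma trace_mul_psd_nonneg {P Q : Matrix m m ℂ} (hP : P.PosSemidef) (hQ : Q.PosSemidef) :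
    0 ≤ ((P * Q).trace).re := by
  obtain ⟨B, rfl⟩ : ∃ B : Matrix m m ℂ, P = Bᴴ * B := by
    open scoped MatrixOrder in
    exact ⟨CFC.sqrt P, by
      rw [← Matrix.star_eq_conjTranspose, (CFC.sqrt_nonneg P).isSelfAdjoint.star_eq,
        CFC.sqrt_mul_sqrt_self P hP.nonneg]⟩
  rw [(Matrix.trace_mul_cycle B Q Bᴴ).symm]
  exact trace_re_nonneg (hQ.mul_mul_conjTranspose_same B)

lemma herm_idem_posSemidef {r : Matrix m m ℂ} (h1 : r.IsHermitian) (h2 : r * r = r) :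
    r.PosSemidef := by
  have : r = rᴴ * r := by rw [h1.eq, h2]
  rw [this]
  exact Matrix.posSemidef_conjTranspose_mul_self r

lemma eq_zero_of_trace_re {X : Matrix m m ℂ} (h : ((Xᴴ * X).trace).re = 0) : X = 0 := by
  have hexp : ((Xᴴ * X).trace).re = ∑ j, ∑ i, Complex.normSq (X i j) := by
    rw [Matrix.trace, Complex.re_sum]
    refine Finset.sum_congr rfl fun j _ => ?_
    rw [Matrix.diag_apply, Matrix.mul_apply, Complex.re_sum]
    refine Finset.sum_congr rfl fun i _ => ?_
    rw [Matrix.conjTranspose_apply]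
    simp [Complex.normSq_apply, Complex.mul_re]
  rw [hexp] at h
  ext i j
  have hj := (Finset.sum_eq_zero_iff_of_nonneg (fun j _ =>
    Finset.sum_nonneg fun i _ => Complex.normSq_nonneg _)).mp h j (Finset.mem_univ j)
  have hij := (Finset.sum_eq_zero_iff_of_nonneg (fun i _ =>
    Complex.normSq_nonneg _)).mp hj i (Finset.mem_univ i)
  simpa using Complex.normSq_eq_zero.mp hij

lemma unitary_conj_psd {W : Matrix m m ℂ} (hW : W ∈ Matrix.unitaryGroup m ℂ)
    {d : m → ℝ} (hd : ∀ i, 0 ≤ d i) :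
    (W * Matrix.diagonal (fun i => (d i : ℂ)) * star W).PosSemidef := by
  rw [Matrix.star_eq_conjTranspose]
  exact (Matrix.posSemidef_diagonal_iff.mpr fun i =>
    Complex.zero_le_real.mpr (hd i)).mul_mul_conjTranspose_same W

lemma smul_one_eq_conj {W : Matrix m m ℂ} (hW : W ∈ Matrix.unitaryGroup m ℂ) (c : ℝ) :
    c • (1 : Matrix m m ℂ) = W * Matrix.diagonal (fun _ : m => (c : ℂ)) * star W := by
  have h1 : Matrix.diagonal (fun _ : m => (c : ℂ)) = c • (1 : Matrix m m ℂ) := by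
    ext i j
    by_cases h : i = j <;>
      simp [Matrix.diagonal_apply, Matrix.one_apply, Matrix.smul_apply, h, Complex.real_smul]
  rw [h1, Matrix.mul_smul, Matrix.smul_mul, mul_one,
    Matrix.mem_unitaryGroup_iff.mp hW]

lemma exists_bound {X : Matrix m m ℂ} (hX : X.IsHermitian) :
    ∃ c : ℝ, 0 ≤ c ∧ (c • (1 : Matrix m m ℂ) - X).PosSemidef ∧
      (c • (1 : Matrix m m ℂ) + X).PosSemidef := by
  classical
  set W : Matrix m m ℂ := (Matrix.IsHermitian.eigenvectorUnitary hX : Matrix m m ℂ) with hWdef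
  have hWmem : W ∈ Matrix.unitaryGroup m ℂ := (Matrix.IsHermitian.eigenvectorUnitary hX).2
  set lam := hX.eigenvalues with hlam
  have hspec : X = W * Matrix.diagonal (fun i => ((lam i : ℝ) : ℂ)) * star W := by
    have := hX.spectral_theorem
    rw [Unitary.conjStarAlgAut_apply] at this
    exact this
  refine ⟨∑ i, |lam i|, Finset.sum_nonneg fun i _ => abs_nonneg _, ?_, ?_⟩
  · rw [smul_one_eq_conj hWmem, hspec, ← Matrix.sub_mul, ← Matrix.mul_sub,
      Matrix.diagonal_sub]
    have : (fun i => ((∑ j, |lam j| : ℝ) : ℂ) - ((lam i : ℝ) : ℂ)) =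
        fun i => (((∑ j, |lam j|) - lam i : ℝ) : ℂ) := by
      funext i; push_cast; ring
    rw [this]
    refine unitary_conj_psd hWmem fun i => ?_
    have := Finset.single_le_sum (f := fun j => |lam j|) (fun j _ => abs_nonneg _)
      (Finset.mem_univ i)
    have h2 := le_abs_self (lam i)
    linarith
  · rw [smul_one_eq_conj hWmem, hspec, ← Matrix.add_mul, ← Matrix.mul_add,
      Matrix.diagonal_add]
    have : (fun i => ((∑ j, |lam j| : ℝ) : ℂ) + ((lam i : ℝ) : ℂ)) =
        fun i => (((∑ j, |lam j|) + lam i : ℝ) : ℂ) := by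
      funext i; push_cast; ring
    rw [this]
    refine unitary_conj_psd hWmem fun i => ?_
    have := Finset.single_le_sum (f := fun j => |lam j|) (fun j _ => abs_nonneg _)
      (Finset.mem_univ i)
    have h2 := neg_abs_le (lam i)
    linarith

lemma exists_delta {b sp : Matrix m m ℂ} (hb : b.PosSemidef) (hsp : IsSuppProj b sp) :
    ∃ δ : ℝ, 0 < δ ∧ (b - δ • sp).PosSemidef := by
  classical
  cases isEmpty_or_nonempty m with
  | inl h =>
    refine ⟨1, one_pos, Matrix.posSemidef_iff_dotProduct_mulVec.mpr ⟨Matrix.ext fun i j => isEmptyElim i, fun x => ?_⟩⟩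
    have : star x ⬝ᵥ (b - (1:ℝ) • sp) *ᵥ x = 0 := by
      simp [dotProduct, Finset.univ_eq_empty]
    rw [this]
  | inr hm =>
  have hbh : b.IsHermitian := hb.1
  set W : Matrix m m ℂ := (Matrix.IsHermitian.eigenvectorUnitary hbh : Matrix m m ℂ) with hWdef
  have hWmem : W ∈ Matrix.unitaryGroup m ℂ := (Matrix.IsHermitian.eigenvectorUnitary hbh).2
  have hWW : W * star W = 1 := Matrix.mem_unitaryGroup_iff.mp hWmem
  have hWW' : star W * W = 1 := Matrix.mem_unitaryGroup_iff'.mp hWmem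
  set lam := hbh.eigenvalues with hlam
  have hlam0 : ∀ i, 0 ≤ lam i := fun i => hb.eigenvalues_nonneg i
  have hspec : b = W * Matrix.diagonal (fun i => ((lam i : ℝ) : ℂ)) * star W := by
    have := hbh.spectral_theorem
    rw [Unitary.conjStarAlgAut_apply] at this
    exact this
  have conj_mul : ∀ D1 D2 : Matrix m m ℂ,
      (W * D1 * star W) * (W * D2 * star W) = W * (D1 * D2) * star W := by
    intro D1 D2
    calc (W * D1 * star W) * (W * D2 * star W)
        = W * D1 * ((star W * W) * (D2 * star W)) := by simp only [Matrix.mul_assoc]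
      _ = W * (D1 * D2) * star W := by
          rw [hWW', Matrix.one_mul]; simp only [Matrix.mul_assoc]
  set e : m → ℂ := fun i => if lam i = 0 then 0 else 1 with he
  have hestar : star e = e := by
    funext i; by_cases h : lam i = 0 <;> simp [he, h]
  set p : Matrix m m ℂ := W * Matrix.diagonal e * star W with hp
  have hpherm : p.IsHermitian := by
    have h1 : pᴴ = W * (Matrix.diagonal e)ᴴ * Wᴴ := by
      rw [hp, Matrix.star_eq_conjTranspose, Matrix.conjTranspose_mul,
        Matrix.conjTranspose_mul, Matrix.conjTranspose_conjTranspose, Matrix.mul_assoc]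
    rw [Matrix.IsHermitian, h1, Matrix.diagonal_conjTranspose, hestar, hp,
      Matrix.star_eq_conjTranspose]
  have hee : (fun i => e i * e i) = e := by
    funext i; by_cases h : lam i = 0 <;> simp [he, h]
  have hpidem : p * p = p := by
    rw [hp, conj_mul, Matrix.diagonal_mul_diagonal, hee]
  have helam : (fun i => e i * ((lam i : ℝ) : ℂ)) = fun i => ((lam i : ℝ) : ℂ) := by
    funext i; by_cases h : lam i = 0 <;> simp [he, h]
  have hpb : p * b = b := by
    rw [hp, hspec, conj_mul, Matrix.diagonal_mul_diagonal, helam]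
  have hps : p * sp = sp := hsp.2.2.2 p hpherm hpidem hpb
  have hsps : sp * p = sp := by
    have h2 := congrArg Matrix.conjTranspose hps
    rwa [Matrix.conjTranspose_mul, hpherm.eq, hsp.1.eq] at h2
  have hdiffherm : (p - sp).IsHermitian := hpherm.sub hsp.1
  have hdiffidem : (p - sp) * (p - sp) = p - sp := by
    rw [Matrix.sub_mul, Matrix.mul_sub, Matrix.mul_sub, hpidem, hps, hsps, hsp.2.1]
    simp
  have hdiffpsd := herm_idem_posSemidef hdiffherm hdiffidem
  set δ : ℝ := Finset.univ.inf' Finset.univ_nonempty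
    (fun i => if lam i = 0 then 1 else lam i) with hδ
  have hδpos : 0 < δ := by
    rw [hδ, Finset.lt_inf'_iff]
    intro i _
    by_cases h : lam i = 0
    · simp [h]
    · simp only [h, if_false]
      exact (hlam0 i).lt_of_ne (Ne.symm h)
  have hδle : ∀ i, lam i ≠ 0 → δ ≤ lam i := by
    intro i h
    have := Finset.inf'_le (fun i => if lam i = 0 then 1 else lam i) (Finset.mem_univ i)
    rwa [if_neg h] at this
  have h1 : (b - δ • p).PosSemidef := by
    have hδp : δ • p = W * Matrix.diagonal (δ • e) * star W := by
      rw [Matrix.diagonal_smul, hp]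
      simp only [mul_smul_comm, smul_mul_assoc]
    have hrw : b - δ • p =
        W * Matrix.diagonal (fun i => ((lam i - δ * (if lam i = 0 then 0 else 1) : ℝ) : ℂ))
          * star W := by
      rw [hspec, hδp, ← Matrix.sub_mul, ← Matrix.mul_sub, Matrix.diagonal_sub]
      have hfun : (fun i => ((lam i : ℝ) : ℂ) - (δ • e) i) =
          fun i => ((lam i - δ * (if lam i = 0 then 0 else 1) : ℝ) : ℂ) := by
        funext i
        by_cases h : lam i = 0 <;>
          simp [he, h, Complex.real_smul] <;> push_cast <;> ring_nf
      rw [hfun]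
    rw [hrw]
    refine unitary_conj_psd hWmem fun i => ?_
    by_cases h : lam i = 0
    · simp [h]
    · rw [if_neg h]
      have := hδle i h
      linarith
  refine ⟨δ, hδpos, ?_⟩
  have hsplit : b - δ • sp = (b - δ • p) + δ • (p - sp) := by
    rw [smul_sub]; abel
  rw [hsplit]
  exact h1.add (posSemidef_real_smul hdiffpsd hδpos.le)


/-- The real-bilinear pairing `(B, x) ↦ Re (Tr (B x))`. -/
noncomputable def pairLin : Matrix m m ℂ →ₗ[ℝ] Matrix m m ℂ →ₗ[ℝ] ℝ where
  toFun B :=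
    { toFun := fun x => ((B * x).trace).re
      map_add' := fun x y => by
        show ((B * (x + y)).trace).re = ((B * x).trace).re + ((B * y).trace).re
        rw [Matrix.mul_add, Matrix.trace_add, Complex.add_re]
      map_smul' := fun r x => by
        show ((B * (r • x)).trace).re = r • ((B * x).trace).re
        rw [mul_smul_comm, Matrix.trace_smul, Complex.smul_re] }
  map_add' B C := by
    apply LinearMap.ext; intro x
    show (((B + C) * x).trace).re = ((B * x).trace).re + ((C * x).trace).re
    rw [Matrix.add_mul, Matrix.trace_add, Complex.add_re]
  map_smul' r B := by
    apply LinearMap.ext; intro x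
    show (((r • B) * x).trace).re = r • ((B * x).trace).re
    rw [Matrix.smul_mul, Matrix.trace_smul, Complex.smul_re]

@[simp] lemma pairLin_apply (B x : Matrix m m ℂ) : pairLin B x = ((B * x).trace).re := rfl

/-- Conjugation `x ↦ p x p` as a real-linear map. -/
noncomputable def conjLin (sp : Matrix m m ℂ) : Matrix m m ℂ →ₗ[ℝ] Matrix m m ℂ where
  toFun x := sp * x * sp
  map_add' x y := by
    show sp * (x + y) * sp = sp * x * sp + sp * y * sp
    rw [Matrix.mul_add, Matrix.add_mul]
  map_smul' r x := by
    show sp * (r • x) * sp = r • (sp * x * sp)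
    rw [mul_smul_comm, Matrix.smul_mul]

@[simp] lemma conjLin_apply (sp x : Matrix m m ℂ) : conjLin sp x = sp * x * sp := rfl

end POVMAux


open POVMAux

/-- If the measurement induced by a generalized POVM `M` (with `K`-supports
`s u`) is extremal, then `∑_u dim_ℝ (s_u J s_u) ≤ dim_ℝ J`. -/
theorem measurement_extreme_dim_bound
    (K : Set (Matrix (Fin n) (Fin n) ℂ))
    (hKsub : K ⊆ States A) (hKconv : Convex ℝ K) (hKcl : IsClosed K)
    (hKsec : K = Jset K ∩ States A)
    (hfull : ∃ ρ ∈ K, ρ.PosDef)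
    (U : Type) [Fintype U]
    (M : U → Matrix (Fin n) (Fin n) ℂ) (hM : M ∈ GPOVMs A K U)
    (s : U → Matrix (Fin n) (Fin n) ℂ) (hs : ∀ u, IsKSupp A K (M u) (s u))
    (hext : inducedMeas K M ∈ (MeasSet K U).extremePoints ℝ) :
    ∑ u : U, Module.finrank ℝ
        (Submodule.span ℝ ((fun x => s u * x * s u) '' Jset K)) ≤
      Module.finrank ℝ (Submodule.span ℝ (Jset K)) := by
  classical
  cases isEmpty_or_nonempty U with
  | inl hU => simp
  | inr hUne =>
  set V : Submodule ℝ (Matrix (Fin n) (Fin n) ℂ) := Submodule.span ℝ (Jset K) with hV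
  set W : U → Submodule ℝ (Matrix (Fin n) (Fin n) ℂ) :=
    fun u => Submodule.span ℝ ((fun x => s u * x * s u) '' Jset K) with hW
  -- Hermitian elements
  have hJherm : ∀ x ∈ Jset K, x.IsHermitian := by
    rintro x ⟨y, ⟨t, ht, a, haK, rfl⟩, z, ⟨t', ht', a', ha'K, rfl⟩, rfl⟩
    exact (real_smul_herm ((hKsub haK).2.1).1 t).sub (real_smul_herm ((hKsub ha'K).2.1).1 t')
  have hVherm : ∀ x ∈ V, x.IsHermitian := by
    intro x hx
    have hle : V ≤
        ({ carrier := {x : Matrix (Fin n) (Fin n) ℂ | x.IsHermitian}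
           add_mem' := fun h1 h2 => h1.add h2
           zero_mem' := Matrix.isHermitian_zero
           smul_mem' := fun r x hx => real_smul_herm hx r } : Submodule ℝ _) :=
      Submodule.span_le.mpr hJherm
    exact hle hx
  have hKJ : ∀ ρ ∈ K, ρ ∈ Jset K := by
    intro ρ hρ
    exact ⟨ρ, ⟨1, zero_le_one, ρ, hρ, (one_smul ℝ ρ).symm⟩,
      (0:ℝ) • ρ, ⟨0, le_rfl, ρ, hρ, rfl⟩, by rw [zero_smul, sub_zero]⟩
  have hKV : ∀ ρ ∈ K, ρ ∈ V := fun ρ hρ => Submodule.subset_span (hKJ ρ hρ)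
  -- data from the K-supports
  choose b hbmem hbsupp using fun u => (hs u).1
  have hbpsd : ∀ u, (b u).PosSemidef := fun u => (hbmem u).2.1
  have hsherm : ∀ u, (s u).IsHermitian := fun u => (hbsupp u).1
  have hsidem : ∀ u, s u * s u = s u := fun u => (hbsupp u).2.1
  have hspsd : ∀ u, (s u).PosSemidef := fun u => herm_idem_posSemidef (hsherm u) (hsidem u)
  choose δ hδpos hδpsd using fun u => exists_delta (hbpsd u) (hbsupp u)
  -- the W u are images of V
  have hWmap : ∀ u, W u = Submodule.map (conjLin (s u)) V := by
    intro u
    rw [hW, hV, ← Submodule.span_image]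
    rfl
  -- the comparison map into the dual of V
  set Φ : (∀ u : U, W u) →ₗ[ℝ] Module.Dual ℝ V :=
    { toFun := fun X => ∑ u, (pairLin ((X u : Matrix (Fin n) (Fin n) ℂ))).comp V.subtype
      map_add' := fun X Y => by
        simp only [Pi.add_apply, Submodule.coe_add, map_add, LinearMap.add_comp]
        rw [Finset.sum_add_distrib]
      map_smul' := fun r X => by
        simp only [Pi.smul_apply, SetLike.val_smul, map_smul, LinearMap.smul_comp,
          RingHom.id_apply]
        rw [← Finset.smul_sum] } with hΦ
  -- key step: Φ is injective
  have hker : ∀ X : (∀ u : U, W u), Φ X = 0 → X = 0 := by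
    intro X hX
    have hnull : ∀ x : V, ∑ u, (((X u : Matrix (Fin n) (Fin n) ℂ)
        * (x : Matrix (Fin n) (Fin n) ℂ)).trace).re = 0 := by
      intro x
      have h0 := congrArg (fun φ : Module.Dual ℝ V => φ x) hX
      simpa [hΦ, LinearMap.sum_apply] using h0
    -- decompose X u = s u * y u * s u
    have hXW : ∀ u, (X u : Matrix (Fin n) (Fin n) ℂ) ∈ Submodule.map (conjLin (s u)) V := by
      intro u
      rw [← hWmap u]
      exact (X u).2
    choose y hyV hyeq using hXW
    have hXherm : ∀ u, (X u : Matrix (Fin n) (Fin n) ℂ).IsHermitian := by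
      intro u
      rw [← hyeq u]
      have hy := hVherm (y u) (hyV u)
      show (s u * y u * s u).IsHermitian
      rw [Matrix.IsHermitian, Matrix.conjTranspose_mul, Matrix.conjTranspose_mul,
        (hsherm u).eq, hy.eq, Matrix.mul_assoc]
    have hXfix : ∀ u, s u * (X u : Matrix (Fin n) (Fin n) ℂ) * s u
        = (X u : Matrix (Fin n) (Fin n) ℂ) := by
      intro u
      rw [← hyeq u]
      show s u * (s u * y u * s u) * s u = s u * y u * s u
      simp only [← Matrix.mul_assoc]
      rw [hsidem u, Matrix.mul_assoc, hsidem u]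
    choose c hc0 hcsub hcadd using fun u => exists_bound (hXherm u)
    -- epsilon
    set ε : ℝ := Finset.univ.inf' Finset.univ_nonempty (fun u => δ u / (c u + 1)) with hε
    have hεpos : 0 < ε := by
      rw [hε, Finset.lt_inf'_iff]
      intro u _
      exact div_pos (hδpos u) (by linarith [hc0 u])
    have hεc : ∀ u, ε * c u ≤ δ u := by
      intro u
      have h1 : ε ≤ δ u / (c u + 1) := Finset.inf'_le _ (Finset.mem_univ u)
      have h2 : (0:ℝ) < c u + 1 := by linarith [hc0 u]
      have h3 : ε * (c u + 1) ≤ δ u := by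
        rw [← div_mul_cancel₀ (δ u) (ne_of_gt h2)]
        exact mul_le_mul_of_nonneg_right h1 h2.le
      nlinarith [hc0 u, hεpos.le]
    -- positivity facts for the perturbed maps
    set f := inducedMeas K M with hf
    set g : U → K → ℝ := fun u ρ =>
      (((X u : Matrix (Fin n) (Fin n) ℂ) * (ρ : Matrix (Fin n) (Fin n) ℂ)).trace).re with hg
    have hfMeas := hext.1
    have hcs_sub : ∀ u, (c u • s u - (X u : Matrix (Fin n) (Fin n) ℂ)).PosSemidef := by
      intro u
      have h1 := (hcsub u).mul_mul_conjTranspose_same (s u)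
      rw [(hsherm u).eq] at h1
      have h2 : s u * (c u • (1 : Matrix (Fin n) (Fin n) ℂ)
          - (X u : Matrix (Fin n) (Fin n) ℂ)) * s u
          = c u • s u - (X u : Matrix (Fin n) (Fin n) ℂ) := by
        rw [Matrix.mul_sub, Matrix.sub_mul, hXfix u, mul_smul_comm, Matrix.mul_one,
          Matrix.smul_mul, hsidem u]
      rwa [h2] at h1
    have hcs_add : ∀ u, (c u • s u + (X u : Matrix (Fin n) (Fin n) ℂ)).PosSemidef := by
      intro u
      have h1 := (hcadd u).mul_mul_conjTranspose_same (s u)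
      rw [(hsherm u).eq] at h1
      have h2 : s u * (c u • (1 : Matrix (Fin n) (Fin n) ℂ)
          + (X u : Matrix (Fin n) (Fin n) ℂ)) * s u
          = c u • s u + (X u : Matrix (Fin n) (Fin n) ℂ) := by
        rw [Matrix.mul_add, Matrix.add_mul, hXfix u, mul_smul_comm, Matrix.mul_one,
          Matrix.smul_mul, hsidem u]
      rwa [h2] at h1
    have hgbound : ∀ (u : U) (ρ : K), |g u ρ| ≤
        c u * ((s u * (ρ : Matrix (Fin n) (Fin n) ℂ)).trace).re := by
      intro u ρ
      have hρpsd : (ρ : Matrix (Fin n) (Fin n) ℂ).PosSemidef := (hKsub ρ.2).2.1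
      have h1 := trace_mul_psd_nonneg (hcs_sub u) hρpsd
      have h2 := trace_mul_psd_nonneg (hcs_add u) hρpsd
      rw [Matrix.sub_mul, Matrix.trace_sub, Complex.sub_re, Matrix.smul_mul,
        Matrix.trace_smul, Complex.smul_re] at h1
      rw [Matrix.add_mul, Matrix.trace_add, Complex.add_re, Matrix.smul_mul,
        Matrix.trace_smul, Complex.smul_re] at h2
      rw [abs_le]
      constructor
      · simp only [smul_eq_mul] at h2
        rw [hg]; dsimp only; linarith
      · simp only [smul_eq_mul] at h1
        rw [hg]; dsimp only; linarith
    have hmb : ∀ (u : U) (ρ : K), f ρ u = ((b u * (ρ : Matrix (Fin n) (Fin n) ℂ)).trace).re := by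
      intro u ρ
      have hk := (hbmem u).2.2.2.2 (ρ : Matrix (Fin n) (Fin n) ℂ) ρ.2
      have h1 : ((ρ : Matrix (Fin n) (Fin n) ℂ) * (b u - M u)).trace = 0 := hk
      rw [Matrix.mul_sub, Matrix.trace_sub, sub_eq_zero] at h1
      have h2 : (M u * (ρ : Matrix (Fin n) (Fin n) ℂ)).trace
          = (b u * (ρ : Matrix (Fin n) (Fin n) ℂ)).trace := by
        rw [Matrix.trace_mul_comm, ← h1, Matrix.trace_mul_comm]
      show ((M u * (ρ : Matrix (Fin n) (Fin n) ℂ)).trace).re = _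
      rw [h2]
    have hflb : ∀ (u : U) (ρ : K),
        δ u * ((s u * (ρ : Matrix (Fin n) (Fin n) ℂ)).trace).re ≤ f ρ u := by
      intro u ρ
      have hρpsd : (ρ : Matrix (Fin n) (Fin n) ℂ).PosSemidef := (hKsub ρ.2).2.1
      have h1 := trace_mul_psd_nonneg (hδpsd u) hρpsd
      rw [Matrix.sub_mul, Matrix.trace_sub, Complex.sub_re, Matrix.smul_mul,
        Matrix.trace_smul, Complex.smul_re] at h1
      rw [hmb u ρ]
      simp only [smul_eq_mul] at h1
      linarith
    have hstr_nonneg : ∀ (u : U) (ρ : K),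
        0 ≤ ((s u * (ρ : Matrix (Fin n) (Fin n) ℂ)).trace).re := by
      intro u ρ
      exact trace_mul_psd_nonneg (hspsd u) (hKsub ρ.2).2.1
    -- sum of the perturbations vanishes on K
    have hgsum : ∀ ρ : K, ∑ u, g u ρ = 0 := by
      intro ρ
      have := hnull ⟨(ρ : Matrix (Fin n) (Fin n) ℂ), hKV _ ρ.2⟩
      simpa [hg] using this
    -- affinity of the perturbations
    have hgaff : ∀ (u : U) (ρ₁ ρ₂ : K) (t : ℝ),
        ∀ h : t • (ρ₁ : Matrix (Fin n) (Fin n) ℂ)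
            + (1 - t) • (ρ₂ : Matrix (Fin n) (Fin n) ℂ) ∈ K,
        g u ⟨_, h⟩ = t * g u ρ₁ + (1 - t) * g u ρ₂ := by
      intro u ρ₁ ρ₂ t h
      rw [hg]
      dsimp only
      rw [Matrix.mul_add, Matrix.trace_add, Complex.add_re, mul_smul_comm, mul_smul_comm,
        Matrix.trace_smul, Matrix.trace_smul, Complex.smul_re, Complex.smul_re]
      simp [smul_eq_mul]
    -- the two perturbed measurements
    set fp : K → U → ℝ := fun ρ u => f ρ u + ε * g u ρ with hfp
    set fm : K → U → ℝ := fun ρ u => f ρ u - ε * g u ρ with hfm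
    have hmem : fp ∈ MeasSet K U ∧ fm ∈ MeasSet K U := by
      constructor <;> refine ⟨fun ρ => ⟨fun u => ?_, ?_⟩, fun ρ₁ ρ₂ t ht0 ht1 h => ?_⟩
      · -- fp nonneg
        have h1 := hflb u ρ
        have h2 := (abs_le.mp (hgbound u ρ)).1
        have h3 := hstr_nonneg u ρ
        have h4 := hεc u
        have h5 := hεpos.le
        show 0 ≤ f ρ u + ε * g u ρ
        nlinarith
      · show ∑ u, (f ρ u + ε * g u ρ) = 1
        rw [Finset.sum_add_distrib, ← Finset.mul_sum, hgsum ρ, mul_zero, add_zero]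
        exact (hfMeas.1 ρ).2
      · funext u
        show f ⟨_, h⟩ u + ε * g u ⟨_, h⟩ = _
        have := congrFun (hfMeas.2 ρ₁ ρ₂ t ht0 ht1 h) u
        rw [this, hgaff u ρ₁ ρ₂ t h]
        simp only [Pi.add_apply, Pi.smul_apply, smul_eq_mul]
        ring
      · -- fm nonneg
        have h1 := hflb u ρ
        have h2 := (abs_le.mp (hgbound u ρ)).2
        have h3 := hstr_nonneg u ρ
        have h4 := hεc u
        have h5 := hεpos.le
        show 0 ≤ f ρ u - ε * g u ρ
        nlinarith
      · show ∑ u, (f ρ u - ε * g u ρ) = 1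
        rw [Finset.sum_sub_distrib, ← Finset.mul_sum, hgsum ρ, mul_zero, sub_zero]
        exact (hfMeas.1 ρ).2
      · funext u
        show f ⟨_, h⟩ u - ε * g u ⟨_, h⟩ = _
        have := congrFun (hfMeas.2 ρ₁ ρ₂ t ht0 ht1 h) u
        rw [this, hgaff u ρ₁ ρ₂ t h]
        simp only [Pi.add_apply, Pi.smul_apply, smul_eq_mul]
        ring
    have hseg : f ∈ openSegment ℝ fp fm := by
      refine ⟨1/2, 1/2, by norm_num, by norm_num, by norm_num, ?_⟩
      funext ρ u
      show (1/2 : ℝ) * (f ρ u + ε * g u ρ) + (1/2 : ℝ) * (f ρ u - ε * g u ρ) = f ρ u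
      ring
    have hfpeq : fp = f := hext.2 hmem.1 hmem.2 hseg
    have hgzero : ∀ (u : U) (ρ : K), g u ρ = 0 := by
      intro u ρ
      have := congrFun (congrFun hfpeq ρ) u
      rw [hfp] at this
      simp only at this
      have h2 : ε * g u ρ = 0 := by linarith
      exact (mul_eq_zero.mp h2).resolve_left (ne_of_gt hεpos)
    -- each X u annihilates V
    have hXzero : ∀ u : U, (X u : Matrix (Fin n) (Fin n) ℂ) = 0 := by
      intro u
      have hVker : ∀ x ∈ V,
          (((X u : Matrix (Fin n) (Fin n) ℂ) * x).trace).re = 0 := by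
        intro x hx
        have hle : V ≤ LinearMap.ker (pairLin (X u : Matrix (Fin n) (Fin n) ℂ)) := by
          rw [hV]
          refine Submodule.span_le.mpr ?_
          rintro x ⟨yy, ⟨t, ht, a, haK, rfl⟩, zz, ⟨t', ht', a', ha'K, rfl⟩, rfl⟩
          have hga := hgzero u ⟨a, haK⟩
          have hga' := hgzero u ⟨a', ha'K⟩
          rw [hg] at hga hga'
          simp only at hga hga'
          simp only [SetLike.mem_coe, LinearMap.mem_ker, map_sub, map_smul]
          simp only [pairLin_apply, smul_eq_mul]
          rw [hga, hga']
          ring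
        simpa using hle hx
      have hy0 : (((X u : Matrix (Fin n) (Fin n) ℂ) * y u).trace).re = 0 :=
        hVker (y u) (hyV u)
      -- trace identity
      set Z : Matrix (Fin n) (Fin n) ℂ := (X u : Matrix (Fin n) (Fin n) ℂ) with hZ
      have hZdef : Z = s u * y u * s u := (hyeq u).symm
      have hZP : Z * s u = Z := by
        rw [hZdef, Matrix.mul_assoc, hsidem u]
      have hPZ : s u * Z = Z := by
        rw [hZdef, ← Matrix.mul_assoc, ← Matrix.mul_assoc, hsidem u]
      have hZZ : Z * Z = Z * y u * s u := by
        nth_rewrite 2 [hZdef]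
        rw [← Matrix.mul_assoc, ← Matrix.mul_assoc, hZP]
      have htr : (Z * Z).trace = (Z * y u).trace := by
        rw [hZZ, Matrix.trace_mul_comm, ← Matrix.mul_assoc, hPZ]
      have hZherm : Matrix.conjTranspose Z = Z := (hXherm u).eq
      have hfin : ((Matrix.conjTranspose Z * Z).trace).re = 0 := by
        rw [hZherm, htr]
        exact hy0
      exact eq_zero_of_trace_re hfin
    funext u
    apply Subtype.ext
    rw [hXzero u]
    simp
  have hinj : Function.Injective Φ := by
    intro X Y hXY
    have h0 : Φ (X - Y) = 0 := by rw [map_sub, hXY, sub_self]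
    have := hker (X - Y) h0
    exact sub_eq_zero.mp this
  -- dimension count
  have hfd : FiniteDimensional ℝ (Matrix (Fin n) (Fin n) ℂ) := by infer_instance
  show ∑ u : U, Module.finrank ℝ (W u) ≤ Module.finrank ℝ V
  calc ∑ u : U, Module.finrank ℝ (W u)
      = Module.finrank ℝ (∀ u : U, W u) := (Module.finrank_pi_fintype ℝ).symm
    _ ≤ Module.finrank ℝ (Module.Dual ℝ V) :=
        LinearMap.finrank_le_finrank_of_injective hinj
    _ = Module.finrank ℝ V := Subspace.dual_finrank_eq
end

section
/- Let K ⊆ 𝔖(A) be a nonempty section and let P_K(A) = {I − s(b) : b ∈ Q}. Then P_K(A) is closed under arbitrary infima: for every nonempty subset P ⊆ P_K(A), the projection ⋀P onto the intersection ⋂_{p∈P} range(p) again belongs to P_K(A). -/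
open scoped ComplexOrder Kronecker

variable {m : Type*} [Fintype m] [DecidableEq m]

variable {n : ℕ} (A : StarSubalgebra ℂ (Matrix (Fin n) (Fin n) ℂ))

namespace PKaux

open Matrix

variable {n : ℕ}

lemma mat_eq_zero_of_mulVec {N : Matrix (Fin n) (Fin n) ℂ}
    (h : ∀ v : Fin n → ℂ, N.mulVec v = 0) : N = 0 := by
  ext i j
  have := congrFun (h (Pi.single j 1)) i
  simpa using this

lemma psd_real_smul {t : ℝ} (ht : 0 ≤ t) {a : Matrix (Fin n) (Fin n) ℂ}
    (ha : a.PosSemidef) : (t • a).PosSemidef := by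
  refine Matrix.PosSemidef.of_dotProduct_mulVec_nonneg ?_ ?_
  · show (t • a)ᴴ = t • a
    rw [Matrix.conjTranspose_smul, star_trivial, ha.1.eq]
  · intro x
    rw [Matrix.smul_mulVec, dotProduct_smul, RCLike.real_smul_eq_coe_mul]
    exact mul_nonneg (RCLike.ofReal_nonneg.mpr ht) (ha.dotProduct_mulVec_nonneg x)

lemma sum_mulVec {ι : Type*} (F : Finset ι) (f : ι → Matrix (Fin n) (Fin n) ℂ)
    (v : Fin n → ℂ) : (∑ q ∈ F, f q).mulVec v = ∑ q ∈ F, (f q).mulVec v :=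
  map_sum (Matrix.mulVec.addMonoidHomLeft v) f F

lemma dotProduct_finset_sum {ι : Type*} (F : Finset ι) (v : Fin n → ℂ)
    (f : ι → Fin n → ℂ) : dotProduct v (∑ q ∈ F, f q) = ∑ q ∈ F, dotProduct v (f q) := by
  classical
  induction F using Finset.induction_on with
  | empty => simp
  | insert _ _ h ih => simp [Finset.sum_insert h, dotProduct_add, ih]

end PKaux

/-- For a nonempty section `K`, the set `P_K(A) = {I - s(b) : b ∈ Q}` is
closed under arbitrary (nonempty) infima: if every `p ∈ P` belongs to `P_K(A)` and `r` is the
orthogonal projection onto `⋂_{p ∈ P} range p` (characterized by its fixed vectors), then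
`r ∈ P_K(A)`. -/
theorem PK_inf_closed
    (K : Set (Matrix (Fin n) (Fin n) ℂ))
    (hKsub : K ⊆ States A) (hKconv : Convex ℝ K) (hKcl : IsClosed K)
    (hKsec : K = Jset K ∩ States A) (hKne : K.Nonempty)
    (P : Set (Matrix (Fin n) (Fin n) ℂ)) (hP : ∀ p ∈ P, memPK K p) (hPne : P.Nonempty)
    (r : Matrix (Fin n) (Fin n) ℂ) (hrH : r.IsHermitian) (hr2 : r * r = r)
    (hfix : ∀ v : Fin n → ℂ, r.mulVec v = v ↔ ∀ p ∈ P, p.mulVec v = v) :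
    memPK K r := by
  classical
  choose bf hbQ sf hsf hpsf using fun q : ↥P => hP q q.2
  set V : ↥P → Submodule ℂ (Fin n → ℂ) :=
    fun q => LinearMap.ker (Matrix.toLin' ((q : Matrix (Fin n) (Fin n) ℂ) - 1)) with hV
  have hmemV : ∀ (q : ↥P) (v : Fin n → ℂ),
      v ∈ V q ↔ (q : Matrix (Fin n) (Fin n) ℂ).mulVec v = v := by
    intro q v
    simp [hV, LinearMap.mem_ker, Matrix.toLin'_apply, Matrix.sub_mulVec,
      Matrix.one_mulVec, sub_eq_zero]
  set S : Set ℕ := {k | ∃ F : Finset ↥P, Module.finrank ℂ ↥(F.inf V) = k} with hS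
  have hSne : S.Nonempty := ⟨_, ∅, rfl⟩
  obtain ⟨F, hF⟩ : sInf S ∈ S := Nat.sInf_mem hSne
  have hFmin : ∀ q : ↥P, F.inf V ≤ V q := by
    intro q
    have h1 : (insert q F).inf V ≤ F.inf V := Finset.inf_mono (Finset.subset_insert q F)
    have h2 : Module.finrank ℂ ↥(F.inf V) ≤ Module.finrank ℂ ↥((insert q F).inf V) := by
      rw [hF]; exact Nat.sInf_le ⟨insert q F, rfl⟩
    have h3 : (insert q F).inf V = F.inf V := Submodule.eq_of_le_of_finrank_le h1 h2
    calc F.inf V = (insert q F).inf V := h3.symm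
      _ ≤ V q := by rw [Finset.inf_insert]; exact inf_le_left
  have key : ∀ v : Fin n → ℂ,
      (∀ q ∈ F, (q : Matrix (Fin n) (Fin n) ℂ).mulVec v = v) → r.mulVec v = v := by
    intro v hv
    have hvF : v ∈ F.inf V :=
      Submodule.mem_finsetInf.mpr fun q hq => (hmemV q v).mpr (hv q hq)
    exact (hfix v).mpr fun p hp => (hmemV ⟨p, hp⟩ v).mp (hFmin ⟨p, hp⟩ hvF)
  set bb : Matrix (Fin n) (Fin n) ℂ := ∑ q ∈ F, bf q with hbb
  have hQzero : (0 : Matrix (Fin n) (Fin n) ℂ) ∈ Qset K := by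
    obtain ⟨a, ha⟩ := hKne
    exact ⟨0, le_refl 0, a, ha, (zero_smul ℝ a).symm⟩
  have hQadd : ∀ x y : Matrix (Fin n) (Fin n) ℂ, x ∈ Qset K → y ∈ Qset K →
      x + y ∈ Qset K := by
    rintro x y ⟨t, ht, a, ha, rfl⟩ ⟨u, hu, c, hc, rfl⟩
    rcases eq_or_lt_of_le (add_nonneg ht hu) with h | h
    · have ht0 : t = 0 := by linarith
      have hu0 : u = 0 := by linarith
      rw [ht0, hu0]
      simpa using hQzero
    · have hne : t + u ≠ 0 := ne_of_gt h
      refine ⟨t + u, h.le, (t / (t + u)) • a + (u / (t + u)) • c,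
        hKconv ha hc (div_nonneg ht h.le) (div_nonneg hu h.le)
          (by rw [← add_div, div_self hne]), ?_⟩
      have e1 : (t + u) * (t / (t + u)) = t := by field_simp
      have e2 : (t + u) * (u / (t + u)) = u := by field_simp
      rw [smul_add, smul_smul, smul_smul, e1, e2]
  have hbbQ : bb ∈ Qset K := by
    rw [hbb]
    exact Finset.sum_induction bf (· ∈ Qset K) hQadd hQzero fun q _ => hbQ q
  have hpsd : ∀ q : ↥P, (bf q).PosSemidef := by
    intro q
    obtain ⟨t, ht, a, ha, he⟩ := hbQ q
    rw [he]
    exact PKaux.psd_real_smul ht (hKsub ha).2.1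
  have hsr : ∀ q ∈ F, sf q * r = 0 := by
    intro q hq
    apply PKaux.mat_eq_zero_of_mulVec
    intro u
    have h1 : r.mulVec (r.mulVec u) = r.mulVec u := by
      rw [Matrix.mulVec_mulVec, hr2]
    have h2 := (hfix (r.mulVec u)).mp h1 q q.2
    rw [hpsf q, Matrix.sub_mulVec, Matrix.one_mulVec] at h2
    have h3 : (sf q).mulVec (r.mulVec u) = 0 := sub_eq_self.mp h2
    rw [← Matrix.mulVec_mulVec]
    exact h3
  have hrs : ∀ q ∈ F, r * sf q = 0 := by
    intro q hq
    have h := congrArg Matrix.conjTranspose (hsr q hq)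
    rwa [Matrix.conjTranspose_mul, hrH.eq, (hsf q).1.eq, Matrix.conjTranspose_zero] at h
  have hrbb : r * bb = 0 := by
    rw [hbb, Finset.mul_sum]
    refine Finset.sum_eq_zero fun q hq => ?_
    rw [← (hsf q).2.2.1, ← mul_assoc, hrs q hq, zero_mul]
  have h1rH : (1 - r).IsHermitian := Matrix.isHermitian_one.sub hrH
  refine ⟨bb, hbbQ, 1 - r, ⟨h1rH, ?_, ?_, ?_⟩, (sub_sub_cancel 1 r).symm⟩
  · rw [sub_mul, one_mul, mul_sub, mul_one, hr2, sub_self, sub_zero]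
  · rw [sub_mul, one_mul, hrbb, sub_zero]
  · intro w hwH hw2 hwb
    have hbbH : bb.IsHermitian := by
      show Matrix.conjTranspose bb = bb
      rw [hbb, Matrix.conjTranspose_sum]
      exact Finset.sum_congr rfl fun q _ => (hpsd q).1.eq
    have hbbw : bb * w = bb := by
      have h := congrArg Matrix.conjTranspose hwb
      rwa [Matrix.conjTranspose_mul, hwH.eq, hbbH.eq] at h
    have hwb' : ∀ q ∈ F, w * bf q = bf q := by
      intro q hq
      have hz : bf q * (1 - w) = 0 := by
        apply PKaux.mat_eq_zero_of_mulVec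
        intro u
        set v := (1 - w).mulVec u with hv
        have hbv : bb.mulVec v = 0 := by
          rw [hv, Matrix.mulVec_mulVec, mul_sub, mul_one, hbbw, sub_self, Matrix.zero_mulVec]
        have hsum : ∑ q' ∈ F, dotProduct (star v) ((bf q').mulVec v) = 0 := by
          rw [← PKaux.dotProduct_finset_sum, ← PKaux.sum_mulVec, ← hbb, hbv,
            dotProduct_zero]
        have hterm : dotProduct (star v) ((bf q).mulVec v) = 0 :=
          (Finset.sum_eq_zero_iff_of_nonneg fun q' _ => (hpsd q').dotProduct_mulVec_nonneg v).mp hsum q hq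
        have h4 := ((hpsd q).dotProduct_mulVec_zero_iff v).mp hterm
        rw [← Matrix.mulVec_mulVec, ← hv]
        exact h4
      have hz' : bf q * w = bf q := by
        rw [mul_sub, mul_one, sub_eq_zero] at hz
        exact hz.symm
      have h := congrArg Matrix.conjTranspose hz'
      rwa [Matrix.conjTranspose_mul, hwH.eq, (hpsd q).1.eq] at h
    have hws : ∀ q ∈ F, w * sf q = sf q := fun q hq =>
      (hsf q).2.2.2 w hwH hw2 (hwb' q hq)
    have hsw : ∀ q ∈ F, sf q * w = sf q := by
      intro q hq
      have h := congrArg Matrix.conjTranspose (hws q hq)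
      rwa [Matrix.conjTranspose_mul, hwH.eq, (hsf q).1.eq] at h
    have hfin : (1 - r) * (1 - w) = 0 := by
      apply PKaux.mat_eq_zero_of_mulVec
      intro u
      set v := (1 - w).mulVec u with hv
      have hrv : r.mulVec v = v := by
        apply key
        intro q hq
        rw [hpsf q, Matrix.sub_mulVec, Matrix.one_mulVec]
        have hsv : (sf q).mulVec v = 0 := by
          rw [hv, Matrix.mulVec_mulVec, mul_sub, mul_one, hsw q hq, sub_self,
            Matrix.zero_mulVec]
        rw [hsv, sub_zero]
      rw [← Matrix.mulVec_mulVec, ← hv, Matrix.sub_mulVec, Matrix.one_mulVec, hrv, sub_self]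
    have h5 : (1 - r) * w = 1 - r := by
      rw [mul_sub, mul_one, sub_eq_zero] at hfin
      exact hfin.symm
    have h6 := congrArg Matrix.conjTranspose h5
    rwa [Matrix.conjTranspose_mul, hwH.eq, h1rH.eq] at h6
end

section
/- Let K ⊆ 𝔖(A) be a closed convex set containing an invertible (full-rank) element. Then for every a ∈ A⁺, the set (a + K^⊥)⁺ of positive elements in the coset a + K^⊥ is convex and compact. -/
open scoped ComplexOrder Kronecker

variable {m : Type*} [Fintype m] [DecidableEq m]

section St10Helpers

namespace St10

lemma isClosed_nonneg : IsClosed {z : ℂ | 0 ≤ z} := by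
  have : {z : ℂ | 0 ≤ z} = Complex.re ⁻¹' Set.Ici 0 ∩ Complex.im ⁻¹' {0} := by
    ext z
    simp [Complex.le_def, eq_comm]
  rw [this]
  exact (isClosed_Ici.preimage Complex.continuous_re).inter
    (isClosed_singleton.preimage Complex.continuous_im)

variable {k : Type*} [Fintype k] [DecidableEq k]

lemma diag_nonneg {M : Matrix k k ℂ} (hM : M.PosSemidef) (i : k) : 0 ≤ M i i := by
  have hs : star (Pi.single i 1 : k → ℂ) = Pi.single i 1 := by
    ext j; simp [Pi.single_apply, apply_ite]
  have := hM.dotProduct_mulVec_nonneg (Pi.single i 1)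
  rw [Matrix.mulVec_single, hs] at this
  simpa [single_dotProduct] using this

lemma trace_nonneg {M : Matrix k k ℂ} (hM : M.PosSemidef) : 0 ≤ M.trace := by
  rw [Matrix.trace]
  exact Finset.sum_nonneg fun i _ => diag_nonneg hM i

lemma trace_mul_nonneg {M N : Matrix k k ℂ} (hM : M.PosSemidef) (hN : N.PosSemidef) :
    0 ≤ (M * N).trace := by
  have h0 : ∃ B : Matrix k k ℂ, M = star B * B := by
    open scoped MatrixOrder in
    exact CStarAlgebra.nonneg_iff_eq_star_mul_self.mp hM.nonneg
  obtain ⟨B, rfl⟩ := h0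
  have h1 : (star B * B * N).trace = (B * N * star B).trace := by
    rw [mul_assoc, Matrix.trace_mul_comm]
  rw [h1]
  have h2 : (B * N * star B).PosSemidef := by
    simpa [Matrix.star_eq_conjTranspose] using hN.mul_mul_conjTranspose_same B
  exact trace_nonneg h2

lemma exists_smul_le [Nonempty k] {ρ : Matrix k k ℂ} (hρ : ρ.PosDef) :
    ∃ ε : ℝ, 0 < ε ∧ (ρ - (ε : ℂ) • 1).PosSemidef := by
  have hH := hρ.isHermitian
  set ε := Finset.univ.inf' Finset.univ_nonempty hH.eigenvalues with hε
  refine ⟨ε, ?_, ?_⟩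
  · obtain ⟨i, -, hi⟩ := Finset.exists_mem_eq_inf' Finset.univ_nonempty hH.eigenvalues
    rw [hε, hi]
    exact hρ.eigenvalues_pos i
  · set V : Matrix k k ℂ := (hH.eigenvectorUnitary : Matrix k k ℂ) with hV
    have hd : Matrix.PosSemidef
        (Matrix.diagonal (fun i => ((hH.eigenvalues i - ε : ℝ) : ℂ))) := by
      refine Matrix.PosSemidef.diagonal ?_
      intro i
      have h0 : (0 : ℝ) ≤ hH.eigenvalues i - ε :=
        sub_nonneg.2 (Finset.inf'_le _ (Finset.mem_univ i))
      show (0 : ℂ) ≤ ((hH.eigenvalues i - ε : ℝ) : ℂ)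
      exact_mod_cast h0
    have hVU : V * star V = 1 := (Matrix.mem_unitaryGroup_iff).mp hH.eigenvectorUnitary.2
    have hdd : Matrix.diagonal (fun i => ((hH.eigenvalues i - ε : ℝ) : ℂ))
        = Matrix.diagonal (RCLike.ofReal ∘ hH.eigenvalues) - (ε : ℂ) • 1 := by
      ext i j
      by_cases h : i = j <;>
        simp [h, Matrix.diagonal_apply, Matrix.one_apply, Complex.ofReal_sub]
    have key : ρ - (ε : ℂ) • 1
        = V * Matrix.diagonal (fun i => ((hH.eigenvalues i - ε : ℝ) : ℂ)) * star V := by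
      have hs := hH.spectral_theorem
      simp only [Unitary.conjStarAlgAut_apply, Unitary.coe_star] at hs
      rw [← hV] at hs
      rw [hdd, Matrix.mul_sub, Matrix.sub_mul, ← hs]
      congr 1
      rw [Matrix.mul_smul, mul_one, Matrix.smul_mul, hVU]
    rw [key]
    have := hd.mul_mul_conjTranspose_same V
    rwa [← Matrix.star_eq_conjTranspose] at this

lemma entry_abs_le_trace {M : Matrix k k ℂ} (hM : M.PosSemidef) (i j : k) :
    ‖M i j‖ ≤ M.trace.re := by
  have hdiag := fun l => diag_nonneg hM l
  have him : ∀ l, (M l l).im = 0 := fun l => ((Complex.le_def.mp (hdiag l)).2).symm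
  have hrepos : ∀ l, 0 ≤ (M l l).re := fun l => by
    simpa using (Complex.le_def.mp (hdiag l)).1
  have htr : M.trace.re = ∑ l, (M l l).re := by
    rw [Matrix.trace]
    exact Complex.re_sum _ _
  have hdle : ∀ l, (M l l).re ≤ M.trace.re := by
    intro l
    rw [htr]
    exact Finset.single_le_sum (fun l _ => hrepos l) (Finset.mem_univ l)
  have hT : 0 ≤ M.trace.re := by
    rw [htr]; exact Finset.sum_nonneg fun l _ => hrepos l
  by_cases hij : i = j
  · subst hij
    have h : M i i = ((M i i).re : ℂ) := Complex.ext rfl (by simp [him i])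
    rw [h, Complex.norm_of_nonneg (hrepos i)]
    exact hdle i
  · set B := M i j with hB
    set N := Complex.normSq B with hN
    set α := (M i i).re with hα
    set β := (M j j).re with hβ
    have hii : M i i = (α : ℂ) := Complex.ext rfl (by simp [him i])
    have hjj : M j j = (β : ℂ) := Complex.ext rfl (by simp [him j])
    have hji : M j i = star B := by
      rw [hB, ← hM.isHermitian.apply i j]
      simp [Matrix.conjTranspose_apply]
    have hquad : ∀ t : ℝ, 0 ≤ (α * N) * (t * t) + (2 * N) * t + β := by
      intro t
      set c : ℂ := (t : ℂ) * B with hc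
      have hsx : star ((Pi.single i c + Pi.single j 1 : k → ℂ))
          = Pi.single i (star c) + Pi.single j 1 := by
        ext l
        simp only [Pi.star_apply, Pi.add_apply, Pi.single_apply]
        split_ifs <;> simp
      have h0 := hM.dotProduct_mulVec_nonneg ((Pi.single i c + Pi.single j 1 : k → ℂ))
      have hQ : dotProduct (star ((Pi.single i c + Pi.single j 1 : k → ℂ)))
          (M.mulVec ((Pi.single i c + Pi.single j 1 : k → ℂ)))
          = (((α * N) * (t * t) + (2 * N) * t + β : ℝ) : ℂ) := by
        rw [hsx]
        rw [Matrix.mulVec_add, Matrix.mulVec_single, Matrix.mulVec_single,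
          add_dotProduct, single_dotProduct, single_dotProduct]
        simp only [Pi.add_apply, Pi.smul_apply, Matrix.col_apply, op_smul_eq_mul, mul_one, one_mul]
        rw [hii, hjj, hji, hc]
        have hBB : B * (starRingEnd ℂ) B = ((N : ℝ) : ℂ) := Complex.mul_conj B
        simp only [RCLike.star_def, map_mul, Complex.conj_ofReal]
        push_cast
        linear_combination ((t : ℂ) * (t : ℂ) * (α : ℂ) + 2 * (t : ℂ)) * hBB
      rw [hQ] at h0
      exact_mod_cast h0
    have hdisc := discrim_le_zero hquad
    rw [discrim] at hdisc
    have hN0 : 0 ≤ N := Complex.normSq_nonneg B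
    have hα' : α ≤ M.trace.re := hdle i
    have hβ' : β ≤ M.trace.re := hdle j
    have hNle : N ≤ M.trace.re ^ 2 := by
      rcases hN0.eq_or_lt with h | h
      · rw [← h]; positivity
      · have h1 : N * N ≤ (α * β) * N := by nlinarith [hdisc]
        have h2 : N ≤ α * β := le_of_mul_le_mul_right h1 h
        have h3 : α * β ≤ M.trace.re * M.trace.re :=
          mul_le_mul hα' hβ' (hrepos j) hT
        calc N ≤ α * β := h2
          _ ≤ M.trace.re * M.trace.re := h3
          _ = M.trace.re ^ 2 := (sq _).symm
    rw [Complex.norm_def, ← hN]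
    calc Real.sqrt N ≤ Real.sqrt (M.trace.re ^ 2) := Real.sqrt_le_sqrt hNle
      _ = M.trace.re := Real.sqrt_sq hT

lemma real_smul_eq (s : ℝ) (M : Matrix k k ℂ) : s • M = (s : ℂ) • M := by
  ext i j
  simp [Matrix.smul_apply, Complex.real_smul]

lemma psd_csmul {M : Matrix k k ℂ} (hM : M.PosSemidef) {s : ℝ} (hs : 0 ≤ s) :
    ((s : ℂ) • M).PosSemidef := by
  refine Matrix.PosSemidef.of_dotProduct_mulVec_nonneg ?_ ?_
  · show ((s : ℂ) • M).conjTranspose = _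
    rw [Matrix.conjTranspose_smul, hM.1.eq, RCLike.star_def, Complex.conj_ofReal]
  · intro x
    rw [Matrix.smul_mulVec, dotProduct_smul, smul_eq_mul]
    exact mul_nonneg (by exact_mod_cast hs) (hM.dotProduct_mulVec_nonneg x)

lemma herm_csmul {M : Matrix k k ℂ} (hM : M.IsHermitian) (s : ℝ) :
    ((s : ℂ) • M).IsHermitian := by
  show ((s : ℂ) • M).conjTranspose = _
  rw [Matrix.conjTranspose_smul, hM.eq, RCLike.star_def, Complex.conj_ofReal]

end St10

end St10Helpers

variable {n : ℕ} (A : StarSubalgebra ℂ (Matrix (Fin n) (Fin n) ℂ))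

/-- If the closed convex set `K ⊆ 𝔖(A)` contains a full-rank element, then
for every `a ∈ A⁺` the set `(a + K^⊥)⁺` is convex and compact. -/
theorem posCoset_convex_compact
    (K : Set (Matrix (Fin n) (Fin n) ℂ))
    (hKsub : K ⊆ States A) (hKconv : Convex ℝ K) (hKcl : IsClosed K)
    (hfull : ∃ ρ ∈ K, ρ.PosDef)
    (a : Matrix (Fin n) (Fin n) ℂ) (haA : a ∈ A) (haPos : a.PosSemidef) :
    Convex ℝ (posCoset A K a) ∧ IsCompact (posCoset A K a) := by
  constructor
  · -- Convexity
    rintro x ⟨hxA, hxP, hx1, hx2, hx3⟩ y ⟨hyA, hyP, hy1, hy2, hy3⟩ s t hs ht hst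
    rw [St10.real_smul_eq, St10.real_smul_eq]
    have hcomb : (s : ℂ) • x + (t : ℂ) • y - a = (s : ℂ) • (x - a) + (t : ℂ) • (y - a) := by
      have h1 : (s : ℂ) • a + (t : ℂ) • a = a := by
        rw [← add_smul]
        norm_cast
        rw [hst, one_smul]
      conv_lhs => rw [← h1]
      rw [smul_sub, smul_sub]
      abel
    refine ⟨A.add_mem (A.smul_mem hxA _) (A.smul_mem hyA _),
      (St10.psd_csmul hxP hs).add (St10.psd_csmul hyP ht), ?_⟩
    rw [hcomb]
    refine ⟨A.add_mem (A.smul_mem (A.sub_mem hxA haA) _) (A.smul_mem (A.sub_mem hyA haA) _),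
      (St10.herm_csmul hx2 s).add (St10.herm_csmul hy2 t), ?_⟩
    intro ρ hρ
    rw [mul_add, Matrix.trace_add, Matrix.mul_smul, Matrix.trace_smul,
      Matrix.mul_smul, Matrix.trace_smul, hx3 ρ hρ, hy3 ρ hρ]
    simp
  · -- Compactness
    rcases Nat.eq_zero_or_pos n with h0 | hpos
    · exfalso
      obtain ⟨ρ, hρK, -⟩ := hfull
      have h1 : ρ.trace = 1 := (hKsub hρK).2.2
      have h2 : ρ.trace = 0 := by
        subst h0
        simp [Matrix.trace]
      rw [h2] at h1
      exact zero_ne_one h1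
    haveI : Nonempty (Fin n) := ⟨⟨0, hpos⟩⟩
    obtain ⟨ρ, hρK, hρpd⟩ := hfull
    obtain ⟨ε, hε, hεpsd⟩ := St10.exists_smul_le hρpd
    set C := ((ρ * a).trace.re) / ε with hC
    have hCnn : 0 ≤ C := by
      have h := St10.trace_mul_nonneg hρpd.posSemidef haPos
      have h' : 0 ≤ (ρ * a).trace.re := by simpa using (Complex.le_def.mp h).1
      exact div_nonneg h' hε.le
    -- closedness
    have hAclosed : IsClosed ((A : Set (Matrix (Fin n) (Fin n) ℂ))) := by
      have := Submodule.closed_of_finiteDimensional (𝕜 := ℂ)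
        (Subalgebra.toSubmodule A.toSubalgebra)
      simpa using this
    have hPSDclosed : IsClosed {M : Matrix (Fin n) (Fin n) ℂ | M.PosSemidef} := by
      have hset : {M : Matrix (Fin n) (Fin n) ℂ | M.PosSemidef}
          = {M : Matrix (Fin n) (Fin n) ℂ | M.conjTranspose = M} ∩
            ⋂ x : Fin n → ℂ, {M : Matrix (Fin n) (Fin n) ℂ |
              0 ≤ dotProduct (star x) (M.mulVec x)} := by
        ext M
        simp only [Set.mem_setOf_eq, Set.mem_inter_iff, Set.mem_iInter]
        exact ⟨fun h => ⟨h.1, h.dotProduct_mulVec_nonneg⟩,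
            fun h => Matrix.PosSemidef.of_dotProduct_mulVec_nonneg h.1 h.2⟩
      rw [hset]
      refine (isClosed_eq (Continuous.matrix_conjTranspose continuous_id) continuous_id).inter
        (isClosed_iInter fun x => ?_)
      have hc : Continuous fun M : Matrix (Fin n) (Fin n) ℂ =>
          dotProduct (star x) (M.mulVec x) :=
        (continuous_const).dotProduct (continuous_id.matrix_mulVec continuous_const)
      exact St10.isClosed_nonneg.preimage hc
    have hKperpclosed : IsClosed (Kperp A K) := by
      have hset : Kperp A K = ((A : Set (Matrix (Fin n) (Fin n) ℂ)) ∩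
          {M : Matrix (Fin n) (Fin n) ℂ | M.conjTranspose = M}) ∩
          ⋂ ρ' ∈ K, {x : Matrix (Fin n) (Fin n) ℂ | (ρ' * x).trace = 0} := by
        ext x
        simp only [Kperp, Set.mem_setOf_eq, Set.mem_inter_iff, Set.mem_iInter, SetLike.mem_coe]
        exact ⟨fun h => ⟨⟨h.1, h.2.1⟩, h.2.2⟩, fun h => ⟨h.1.1, h.1.2, h.2⟩⟩
      rw [hset]
      refine (hAclosed.inter
        (isClosed_eq (Continuous.matrix_conjTranspose continuous_id) continuous_id)).inter
        (isClosed_biInter fun ρ' _ => ?_)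
      exact isClosed_eq ((continuous_const.matrix_mul continuous_id).matrix_trace)
        continuous_const
    have hclosed : IsClosed (posCoset A K a) := by
      have hset : posCoset A K a = ((A : Set (Matrix (Fin n) (Fin n) ℂ)) ∩
          {M : Matrix (Fin n) (Fin n) ℂ | M.PosSemidef}) ∩
          ((· - a) ⁻¹' (Kperp A K)) := by
        ext b
        simp only [posCoset, Set.mem_setOf_eq, Set.mem_inter_iff, Set.mem_preimage,
          SetLike.mem_coe]
        exact ⟨fun h => ⟨⟨h.1, h.2.1⟩, h.2.2⟩, fun h => ⟨h.1.1, h.1.2, h.2⟩⟩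
      rw [hset]
      exact (hAclosed.inter hPSDclosed).inter
        (hKperpclosed.preimage (continuous_id.sub continuous_const))
    -- boundedness
    have hbound : ∀ b ∈ posCoset A K a, ∀ i j, ‖b i j‖ ≤ C := by
      rintro b ⟨hbA, hbP, hb1, hb2, hb3⟩ i j
      have htreq : (ρ * b).trace = (ρ * a).trace := by
        have h := hb3 ρ hρK
        rw [Matrix.mul_sub, Matrix.trace_sub, sub_eq_zero] at h
        exact h
      have h1 : 0 ≤ ((ρ - (ε : ℂ) • 1) * b).trace := St10.trace_mul_nonneg hεpsd hbP
      have h2 : ((ρ - (ε : ℂ) • 1) * b).trace = (ρ * b).trace - (ε : ℂ) * b.trace := by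
        rw [Matrix.sub_mul, Matrix.trace_sub, Matrix.smul_mul, one_mul, Matrix.trace_smul,
          smul_eq_mul]
      have h3 : 0 ≤ ((ρ * b).trace - (ε : ℂ) * b.trace).re := by
        rw [← h2]
        simpa using (Complex.le_def.mp h1).1
      have h4 : ε * b.trace.re ≤ (ρ * a).trace.re := by
        have hre := congrArg Complex.re htreq
        simp only [Complex.sub_re, Complex.mul_re, Complex.ofReal_re, Complex.ofReal_im,
          zero_mul, sub_zero] at h3
        linarith
      have h5 : b.trace.re ≤ C := by
        rw [hC, le_div_iff₀ hε]
        linarith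
      exact le_trans (St10.entry_abs_le_trace hbP i j) h5
    -- compactness via pi of closed balls
    have hpiC : IsCompact (Set.univ.pi fun _ : Fin n =>
        Set.univ.pi fun _ : Fin n => Metric.closedBall (0 : ℂ) C) :=
      isCompact_univ_pi fun _ => isCompact_univ_pi fun _ => isCompact_closedBall _ _
    have hofC : Continuous (Matrix.of : (Fin n → Fin n → ℂ) → Matrix (Fin n) (Fin n) ℂ) :=
      continuous_matrix fun i j => (continuous_apply j).comp (continuous_apply i)
    have hbig : IsCompact ((Matrix.of : (Fin n → Fin n → ℂ) → Matrix (Fin n) (Fin n) ℂ) ''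
        (Set.univ.pi fun _ : Fin n =>
          Set.univ.pi fun _ : Fin n => Metric.closedBall (0 : ℂ) C)) := hpiC.image hofC
    refine hbig.of_isClosed_subset hclosed ?_
    intro b hb
    refine ⟨fun i j => b i j, ?_, rfl⟩
    rw [Set.mem_univ_pi]
    intro i
    rw [Set.mem_univ_pi]
    intro j
    rw [Metric.mem_closedBall, dist_zero_right]
    exact hbound b hb i j
end

section
/- Let K ⊆ 𝔖(A) be a closed convex set, a ∈ A⁺, and s = s(a). Then a is an extreme point of the set (a + K^⊥)⁺ if and only if dim_ℝ(sJs) = dim_ℝ(A^h_s), where sJs = {s x s : x ∈ J} and A^h_s = s A^h s. -/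
open scoped ComplexOrder Kronecker

variable {m : Type*} [Fintype m] [DecidableEq m]

variable {n : ℕ} (A : StarSubalgebra ℂ (Matrix (Fin n) (Fin n) ℂ))

section helpers
open Matrix
variable {n : ℕ}


lemma trace_conj_self_re (B : Matrix (Fin n) (Fin n) ℂ) :
    ((Bᴴ * B).trace).re = ∑ j, ∑ i, Complex.normSq (B i j) := by
  rw [Matrix.trace]
  simp only [Matrix.diag_apply, Matrix.mul_apply, Matrix.conjTranspose_apply]
  rw [Complex.re_sum]
  refine Finset.sum_congr rfl fun j _ => ?_
  rw [Complex.re_sum]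
  refine Finset.sum_congr rfl fun i _ => ?_
  simp [Complex.normSq_apply, Complex.mul_re]

lemma trace_conj_self_re_nonneg (B : Matrix (Fin n) (Fin n) ℂ) :
    0 ≤ ((Bᴴ * B).trace).re := by
  rw [trace_conj_self_re]
  refine Finset.sum_nonneg fun j _ => Finset.sum_nonneg fun i _ => Complex.normSq_nonneg _

lemma eq_zero_of_trace_conj_self {B : Matrix (Fin n) (Fin n) ℂ}
    (h : ((Bᴴ * B).trace).re = 0) : B = 0 := by
  rw [trace_conj_self_re] at h
  have := fun j (hj : j ∈ Finset.univ) => Finset.sum_nonneg (fun i (_ : i ∈ Finset.univ) => Complex.normSq_nonneg (B i j))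
  ext i j
  have h2 := (Finset.sum_eq_zero_iff_of_nonneg this).mp h j (Finset.mem_univ j)
  have h3 := (Finset.sum_eq_zero_iff_of_nonneg (fun i _ => Complex.normSq_nonneg (B i j))).mp h2 i (Finset.mem_univ i)
  simpa using Complex.normSq_eq_zero.mp h3

lemma psd_neg_psd_eq_zero {M : Matrix (Fin n) (Fin n) ℂ}
    (h1 : M.PosSemidef) (h2 : (-M).PosSemidef) : M = 0 := by
  obtain ⟨B, hB⟩ : ∃ B : Matrix (Fin n) (Fin n) ℂ, M = Bᴴ * B := by
    open scoped MatrixOrder in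
    exact CStarAlgebra.nonneg_iff_eq_star_mul_self.mp h1.nonneg
  obtain ⟨C, hC⟩ : ∃ C : Matrix (Fin n) (Fin n) ℂ, -M = Cᴴ * C := by
    open scoped MatrixOrder in
    exact CStarAlgebra.nonneg_iff_eq_star_mul_self.mp h2.nonneg
  have htr : ((Bᴴ * B).trace).re + ((Cᴴ * C).trace).re = 0 := by
    rw [← hB, ← hC]
    have : (M + -M).trace = 0 := by simp
    rw [Matrix.trace_add] at this
    have := congrArg Complex.re this
    simpa using this
  have hB0 : ((Bᴴ * B).trace).re = 0 :=
    le_antisymm (by linarith [trace_conj_self_re_nonneg C]) (trace_conj_self_re_nonneg B)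
  rw [hB, eq_zero_of_trace_conj_self hB0]
  simp

lemma psd_conj_zero {M q : Matrix (Fin n) (Fin n) ℂ}
    (hM : M.PosSemidef) (hq : qᴴ = q) (h : q * M * q = 0) : M * q = 0 := by
  obtain ⟨B, hB⟩ : ∃ B : Matrix (Fin n) (Fin n) ℂ, M = Bᴴ * B := by
    open scoped MatrixOrder in
    exact CStarAlgebra.nonneg_iff_eq_star_mul_self.mp hM.nonneg
  have h1 : (B * q)ᴴ * (B * q) = 0 := by
    rw [Matrix.conjTranspose_mul, hq]
    rw [hB] at h
    simp only [Matrix.mul_assoc] at h ⊢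
    exact h
  have h2 : B * q = 0 := eq_zero_of_trace_conj_self (by rw [h1]; simp)
  rw [hB, Matrix.mul_assoc, h2, Matrix.mul_zero]


lemma IsSuppProj.unique {a p r : Matrix (Fin n) (Fin n) ℂ}
    (h1 : IsSuppProj a p) (h2 : IsSuppProj a r) : p = r := by
  have e1 : r * p = p := h1.2.2.2 r h2.1 h2.2.1 h2.2.2.1
  have e2 : p * r = r := h2.2.2.2 p h1.1 h1.2.1 h1.2.2.1
  calc p = pᴴ := h1.1.symm
    _ = (r * p)ᴴ := by rw [e1]
    _ = pᴴ * rᴴ := by rw [conjTranspose_mul]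
    _ = p * r := by rw [h1.1, h2.1]
    _ = r := e2


section spectral

variable (a : Matrix (Fin n) (Fin n) ℂ) (ha : a.IsHermitian)

noncomputable def suppDfun : Fin n → ℂ :=
  fun i => if ha.eigenvalues i = 0 then (0:ℂ) else 1

noncomputable def eUnit : Matrix (Fin n) (Fin n) ℂ :=
  (ha.eigenvectorUnitary : Matrix (Fin n) (Fin n) ℂ)

noncomputable def canonSupp : Matrix (Fin n) (Fin n) ℂ :=
  eUnit a ha * diagonal (suppDfun a ha) * star (eUnit a ha)

lemma eUnit_mul_star : eUnit a ha * star (eUnit a ha) = 1 :=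
  mem_unitaryGroup_iff.mp ha.eigenvectorUnitary.2

lemma star_mul_eUnit : star (eUnit a ha) * eUnit a ha = 1 :=
  mem_unitaryGroup_iff'.mp ha.eigenvectorUnitary.2

lemma spec_thm : a = eUnit a ha * diagonal (RCLike.ofReal ∘ ha.eigenvalues) * star (eUnit a ha) :=
  ha.spectral_theorem

lemma conj_mul_conj (X Y : Matrix (Fin n) (Fin n) ℂ) :
    (eUnit a ha * X * star (eUnit a ha)) * (eUnit a ha * Y * star (eUnit a ha))
      = eUnit a ha * (X * Y) * star (eUnit a ha) := by
  simp only [Matrix.mul_assoc]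
  rw [show star (eUnit a ha) * (eUnit a ha * (Y * star (eUnit a ha)))
      = Y * star (eUnit a ha) by rw [← Matrix.mul_assoc, star_mul_eUnit, Matrix.one_mul]]

lemma conj_conjTranspose (X : Matrix (Fin n) (Fin n) ℂ) :
    (eUnit a ha * X * star (eUnit a ha))ᴴ = eUnit a ha * Xᴴ * star (eUnit a ha) := by
  rw [star_eq_conjTranspose, conjTranspose_mul, conjTranspose_mul, conjTranspose_conjTranspose,
    Matrix.mul_assoc]

lemma isSuppProj_canonSupp : IsSuppProj a (canonSupp a ha) := by
  have hDD : diagonal (suppDfun a ha) * diagonal (suppDfun a ha) = diagonal (suppDfun a ha) := by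
    rw [diagonal_mul_diagonal]
    exact congrArg diagonal (funext fun i => by
      unfold suppDfun; by_cases h : ha.eigenvalues i = 0 <;> simp [h])
  have hDL : diagonal (suppDfun a ha) * diagonal (RCLike.ofReal ∘ ha.eigenvalues)
      = diagonal (RCLike.ofReal ∘ ha.eigenvalues) := by
    rw [diagonal_mul_diagonal]
    exact congrArg diagonal (funext fun i => by
      unfold suppDfun
      by_cases h : ha.eigenvalues i = 0 <;> simp [h])
  refine ⟨?_, ?_, ?_, ?_⟩
  · show _ = _
    unfold canonSupp
    rw [conj_conjTranspose, diagonal_conjTranspose]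
    exact congrArg (fun X => eUnit a ha * X * star (eUnit a ha))
      (congrArg diagonal (funext fun i => by
        simp only [Pi.star_apply]
        unfold suppDfun
        by_cases h : ha.eigenvalues i = 0 <;> simp [h]))
  · unfold canonSupp
    rw [conj_mul_conj, hDD]
  · have e := spec_thm a ha
    calc canonSupp a ha * a
        = canonSupp a ha * (eUnit a ha * diagonal (RCLike.ofReal ∘ ha.eigenvalues)
            * star (eUnit a ha)) := congrArg (fun x => canonSupp a ha * x) e
      _ = eUnit a ha * diagonal (RCLike.ofReal ∘ ha.eigenvalues) * star (eUnit a ha) := by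
          unfold canonSupp; rw [conj_mul_conj, hDL]
      _ = a := e.symm
  · intro r hr hrr hra
    have e : eUnit a ha * diagonal (RCLike.ofReal ∘ ha.eigenvalues) * star (eUnit a ha) = a :=
      (spec_thm a ha).symm
    have key : r * eUnit a ha * diagonal (RCLike.ofReal ∘ ha.eigenvalues)
        = eUnit a ha * diagonal (RCLike.ofReal ∘ ha.eigenvalues) := by
      calc r * eUnit a ha * diagonal (RCLike.ofReal ∘ ha.eigenvalues)
          = r * ((eUnit a ha * diagonal (RCLike.ofReal ∘ ha.eigenvalues) * star (eUnit a ha))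
              * eUnit a ha) := by
            simp only [Matrix.mul_assoc, star_mul_eUnit, Matrix.mul_one]
        _ = r * (a * eUnit a ha) := by rw [e]
        _ = r * a * eUnit a ha := by rw [Matrix.mul_assoc]
        _ = a * eUnit a ha := by rw [hra]
        _ = (eUnit a ha * diagonal (RCLike.ofReal ∘ ha.eigenvalues) * star (eUnit a ha))
              * eUnit a ha := by rw [e]
        _ = eUnit a ha * diagonal (RCLike.ofReal ∘ ha.eigenvalues) := by
            simp only [Matrix.mul_assoc, star_mul_eUnit, Matrix.mul_one]
    have key2 : r * eUnit a ha * diagonal (suppDfun a ha)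
        = eUnit a ha * diagonal (suppDfun a ha) := by
      ext i j
      have hkey := congrFun (congrFun key i) j
      simp only [mul_diagonal, Function.comp_apply] at hkey
      simp only [mul_diagonal]
      unfold suppDfun
      by_cases h : ha.eigenvalues j = 0
      · simp [h]
      · have hne : ((ha.eigenvalues j : ℝ) : ℂ) ≠ 0 := by simpa using h
        have := mul_right_cancel₀ hne hkey
        simp [h, this]
    unfold canonSupp
    calc r * (eUnit a ha * diagonal (suppDfun a ha) * star (eUnit a ha))
        = (r * eUnit a ha * diagonal (suppDfun a ha)) * star (eUnit a ha) := by
          simp only [Matrix.mul_assoc]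
      _ = eUnit a ha * diagonal (suppDfun a ha) * star (eUnit a ha) := by rw [key2]

end spectral

lemma psd_smul {M : Matrix (Fin n) (Fin n) ℂ} (hM : M.PosSemidef) {r : ℝ} (hr : 0 ≤ r) :
    ((r:ℂ) • M).PosSemidef := by
  constructor
  · show _ = _
    rw [conjTranspose_smul, hM.1.eq]
    congr 1
    simp
  · exact (hM.smul (by exact_mod_cast hr : (0:ℂ) ≤ (r:ℂ))).2

/-- Lower bound: `a - δ • s` is PSD for some `δ > 0`. -/
lemma exists_delta (a : Matrix (Fin n) (Fin n) ℂ) (ha : a.PosSemidef) :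
    ∃ δ : ℝ, 0 < δ ∧ (a - (δ:ℂ) • canonSupp a ha.1).PosSemidef := by
  classical
  by_cases hT : (Finset.univ.filter (fun i => ha.1.eigenvalues i ≠ 0)).Nonempty
  case neg =>
    refine ⟨1, one_pos, ?_⟩
    have hD : suppDfun a ha.1 = fun _ => (0:ℂ) := by
      funext i
      have h0 : ha.1.eigenvalues i = 0 := by
        by_contra hne
        exact hT ⟨i, Finset.mem_filter.mpr ⟨Finset.mem_univ i, hne⟩⟩
      unfold suppDfun
      simp [h0]
    have hc : canonSupp a ha.1 = 0 := by
      unfold canonSupp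
      rw [hD, diagonal_zero, Matrix.mul_zero, Matrix.zero_mul]
    rw [hc]
    simpa using ha
  case pos =>
    set T := Finset.univ.filter (fun i => ha.1.eigenvalues i ≠ 0) with hTdef
    set δ := T.inf' hT ha.1.eigenvalues with hδdef
    have hδpos : 0 < δ := by
      rw [hδdef, Finset.lt_inf'_iff]
      intro i hi
      rcases Finset.mem_filter.mp hi with ⟨-, hne⟩
      exact lt_of_le_of_ne (ha.eigenvalues_nonneg i) (Ne.symm hne)
    refine ⟨δ, hδpos, ?_⟩
    have e := spec_thm a ha.1
    have key : a - (δ:ℂ) • canonSupp a ha.1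
        = eUnit a ha.1 * diagonal (fun i => ((ha.1.eigenvalues i : ℂ)
            - (δ:ℂ) * suppDfun a ha.1 i)) * star (eUnit a ha.1) := by
      calc a - (δ:ℂ) • canonSupp a ha.1
          = eUnit a ha.1 * diagonal (RCLike.ofReal ∘ ha.1.eigenvalues) * star (eUnit a ha.1)
              - (δ:ℂ) • canonSupp a ha.1 :=
            congrArg (fun x => x - (δ:ℂ) • canonSupp a ha.1) e
        _ = _ := by
            unfold canonSupp
            have e2 : (δ:ℂ) • (eUnit a ha.1 * diagonal (suppDfun a ha.1) * star (eUnit a ha.1))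
                = eUnit a ha.1 * diagonal ((δ:ℂ) • suppDfun a ha.1) * star (eUnit a ha.1) := by
              rw [diagonal_smul, Matrix.mul_smul, Matrix.smul_mul]
            rw [e2, ← Matrix.sub_mul, ← Matrix.mul_sub, diagonal_sub]
            rfl
    rw [key, star_eq_conjTranspose]
    refine Matrix.PosSemidef.mul_mul_conjTranspose_same ?_ _
    rw [posSemidef_diagonal_iff]
    intro i
    unfold suppDfun
    by_cases h : ha.1.eigenvalues i = 0
    · simp [h]
    · have h1 : δ ≤ ha.1.eigenvalues i :=
        Finset.inf'_le _ (Finset.mem_filter.mpr ⟨Finset.mem_univ i, h⟩)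
      simp only [h, if_false, mul_one]
      rw [← Complex.ofReal_sub, Complex.zero_le_real]
      linarith

/-- Upper bound: there is `c ≥ 0` with `c•1 ± h` PSD. -/
lemma exists_cbound_one (h : Matrix (Fin n) (Fin n) ℂ) (hh : h.IsHermitian) :
    ∃ c : ℝ, 0 ≤ c ∧ ((c:ℂ) • (1 : Matrix (Fin n) (Fin n) ℂ) - h).PosSemidef
      ∧ ((c:ℂ) • (1 : Matrix (Fin n) (Fin n) ℂ) + h).PosSemidef := by
  set c : ℝ := ∑ i, |hh.eigenvalues i| with hc
  have hc0 : 0 ≤ c := Finset.sum_nonneg fun i _ => abs_nonneg _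
  have hbd : ∀ i, |hh.eigenvalues i| ≤ c := fun i =>
    Finset.single_le_sum (f := fun j => |hh.eigenvalues j|) (fun j _ => abs_nonneg _)
      (Finset.mem_univ i)
  have hone : eUnit h hh * diagonal (fun _ => (c:ℂ)) * star (eUnit h hh)
      = (c:ℂ) • (1 : Matrix (Fin n) (Fin n) ℂ) := by
    rw [show diagonal (fun _ => (c:ℂ)) = (c:ℂ) • (1 : Matrix (Fin n) (Fin n) ℂ) by
        rw [← diagonal_one, ← diagonal_smul]
        exact congrArg diagonal (funext fun i => by simp),
      Matrix.mul_smul, Matrix.mul_one, Matrix.smul_mul, eUnit_mul_star]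
  refine ⟨c, hc0, ?_, ?_⟩
  · have key : (c:ℂ) • (1 : Matrix (Fin n) (Fin n) ℂ) - h
        = eUnit h hh * diagonal (fun i => (c:ℂ) - (hh.eigenvalues i : ℂ)) * star (eUnit h hh) := by
      calc (c:ℂ) • (1 : Matrix (Fin n) (Fin n) ℂ) - h
          = eUnit h hh * diagonal (fun _ => (c:ℂ)) * star (eUnit h hh)
            - eUnit h hh * diagonal (RCLike.ofReal ∘ hh.eigenvalues) * star (eUnit h hh) := by
            rw [hone]
            exact congrArg (fun x => (c:ℂ) • (1 : Matrix (Fin n) (Fin n) ℂ) - x) (spec_thm h hh)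
        _ = _ := by rw [← Matrix.sub_mul, ← Matrix.mul_sub, diagonal_sub]; rfl
    rw [key, star_eq_conjTranspose]
    refine Matrix.PosSemidef.mul_mul_conjTranspose_same ?_ _
    rw [posSemidef_diagonal_iff]
    intro i
    rw [← Complex.ofReal_sub, Complex.zero_le_real]
    have := hbd i
    have := abs_le.mp this
    linarith [this.2]
  · have key : (c:ℂ) • (1 : Matrix (Fin n) (Fin n) ℂ) + h
        = eUnit h hh * diagonal (fun i => (c:ℂ) + (hh.eigenvalues i : ℂ)) * star (eUnit h hh) := by
      calc (c:ℂ) • (1 : Matrix (Fin n) (Fin n) ℂ) + h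
          = eUnit h hh * diagonal (fun _ => (c:ℂ)) * star (eUnit h hh)
            + eUnit h hh * diagonal (RCLike.ofReal ∘ hh.eigenvalues) * star (eUnit h hh) := by
            rw [hone]
            exact congrArg (fun x => (c:ℂ) • (1 : Matrix (Fin n) (Fin n) ℂ) + x) (spec_thm h hh)
        _ = _ := by rw [← Matrix.add_mul, ← Matrix.mul_add, diagonal_add]; rfl
    rw [key, star_eq_conjTranspose]
    refine Matrix.PosSemidef.mul_mul_conjTranspose_same ?_ _
    rw [posSemidef_diagonal_iff]
    intro i
    rw [← Complex.ofReal_add, Complex.zero_le_real]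
    have := abs_le.mp (hbd i)
    linarith [this.1]

lemma exists_cbound (s h : Matrix (Fin n) (Fin n) ℂ) (hsherm : sᴴ = s) (hss : s * s = s)
    (hherm : h.IsHermitian) (hsh : s * h * s = h) :
    ∃ c : ℝ, 0 ≤ c ∧ ((c:ℂ) • s - h).PosSemidef ∧ ((c:ℂ) • s + h).PosSemidef := by
  obtain ⟨c, hc0, h1, h2⟩ := exists_cbound_one h hherm
  have conj1 : sᴴ * ((c:ℂ) • (1 : Matrix (Fin n) (Fin n) ℂ) - h) * s = (c:ℂ) • s - h := by
    rw [hsherm, Matrix.mul_sub, Matrix.sub_mul, Matrix.mul_smul, Matrix.mul_one,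
      Matrix.smul_mul, hss, hsh]
  have conj2 : sᴴ * ((c:ℂ) • (1 : Matrix (Fin n) (Fin n) ℂ) + h) * s = (c:ℂ) • s + h := by
    rw [hsherm, Matrix.mul_add, Matrix.add_mul, Matrix.mul_smul, Matrix.mul_one,
      Matrix.smul_mul, hss, hsh]
  exact ⟨c, hc0, conj1 ▸ h1.conjTranspose_mul_mul_same s,
    conj2 ▸ h2.conjTranspose_mul_mul_same s⟩

/-- The perturbation lemma. -/
lemma exists_eps (a : Matrix (Fin n) (Fin n) ℂ) (ha : a.PosSemidef)
    (h : Matrix (Fin n) (Fin n) ℂ) (hherm : h.IsHermitian)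
    (hsh : canonSupp a ha.1 * h * canonSupp a ha.1 = h) :
    ∃ ε : ℝ, 0 < ε ∧ (a + (ε:ℂ) • h).PosSemidef ∧ (a - (ε:ℂ) • h).PosSemidef := by
  obtain ⟨δ, hδ0, hδ⟩ := exists_delta a ha
  set s := canonSupp a ha.1 with hsdef
  obtain ⟨hsH, hss, -, -⟩ := isSuppProj_canonSupp a ha.1
  obtain ⟨c, hc0, hc1, hc2⟩ := exists_cbound s h hsH.eq hss hherm hsh
  have hsPos : s.PosSemidef := by
    have := Matrix.posSemidef_conjTranspose_mul_self s
    rwa [hsH.eq, hss] at this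
  set ε : ℝ := δ / (c + 1) with hε
  have hcpos : (0:ℝ) < c + 1 := by linarith
  have hε0 : 0 < ε := div_pos hδ0 hcpos
  have hεc : 0 ≤ δ - ε * c := by
    have : ε * (c + 1) = δ := div_mul_cancel₀ δ (ne_of_gt hcpos)
    nlinarith
  have hco : ((δ - ε * c : ℝ) : ℂ) = (δ:ℂ) - (ε:ℂ) * (c:ℂ) := by push_cast; ring
  refine ⟨ε, hε0, ?_, ?_⟩
  · have hsum : a + (ε:ℂ) • h = (a - (δ:ℂ) • s)
        + ((ε:ℂ) • ((c:ℂ) • s + h) + (((δ - ε * c : ℝ)):ℂ) • s) := by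
      rw [hco]
      module
    rw [hsum]
    exact hδ.add ((psd_smul hc2 (le_of_lt hε0)).add (psd_smul hsPos hεc))
  · have hsum : a - (ε:ℂ) • h = (a - (δ:ℂ) • s)
        + ((ε:ℂ) • ((c:ℂ) • s - h) + (((δ - ε * c : ℝ)):ℂ) • s) := by
      rw [hco]
      module
    rw [hsum]
    exact hδ.add ((psd_smul hc1 (le_of_lt hε0)).add (psd_smul hsPos hεc))

/-- conjugation by the eigenvector unitary, as an algebra hom -/
noncomputable def conjAlgHom (a : Matrix (Fin n) (Fin n) ℂ) (ha : a.IsHermitian) :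
    Matrix (Fin n) (Fin n) ℂ →ₐ[ℂ] Matrix (Fin n) (Fin n) ℂ where
  toFun X := eUnit a ha * X * star (eUnit a ha)
  map_one' := by
    show eUnit a ha * 1 * star (eUnit a ha) = 1
    rw [Matrix.mul_one, eUnit_mul_star]
  map_mul' X Y := (conj_mul_conj a ha X Y).symm
  map_zero' := by simp
  map_add' X Y := by
    show eUnit a ha * (X + Y) * star (eUnit a ha) = _
    rw [Matrix.mul_add, Matrix.add_mul]
  commutes' r := by
    show eUnit a ha * algebraMap ℂ _ r * star (eUnit a ha) = _
    simp only [Algebra.algebraMap_eq_smul_one]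
    rw [Matrix.mul_smul, Matrix.mul_one, Matrix.smul_mul, eUnit_mul_star]

lemma canonSupp_mem (A : StarSubalgebra ℂ (Matrix (Fin n) (Fin n) ℂ))
    (a : Matrix (Fin n) (Fin n) ℂ) (ha : a.IsHermitian) (haA : a ∈ A) :
    canonSupp a ha ∈ A := by
  classical
  set V : Finset ℂ := insert 0 (Finset.image (fun i => ((ha.eigenvalues i : ℝ) : ℂ))
    Finset.univ) with hV
  set f : ℂ → ℂ := fun z => if z = 0 then 0 else 1 with hf
  set q : Polynomial ℂ := Lagrange.interpolate V id f with hq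
  have hinj : Set.InjOn (id : ℂ → ℂ) V := Function.injective_id.injOn
  have heval : ∀ x ∈ V, q.eval x = f x := by
    intro x hx
    have := Lagrange.eval_interpolate_at_node f hinj hx
    exact this
  have key : Polynomial.aeval a q = canonSupp a ha := by
    have e := spec_thm a ha
    have e2 : Polynomial.aeval a q
        = Polynomial.aeval (conjAlgHom a ha (diagonal (RCLike.ofReal ∘ ha.eigenvalues))) q :=
      congrArg (fun x => Polynomial.aeval x q) e
    rw [e2, Polynomial.aeval_algHom_apply]
    have e3 : Polynomial.aeval (diagonal (RCLike.ofReal ∘ ha.eigenvalues)) q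
        = diagonal (fun i => q.eval ((ha.eigenvalues i : ℝ) : ℂ)) := by
      have e4 : diagonal (RCLike.ofReal ∘ ha.eigenvalues)
          = Matrix.diagonalAlgHom (R := ℂ) (n := Fin n) (α := ℂ) (RCLike.ofReal ∘ ha.eigenvalues) := rfl
      rw [e4, Polynomial.aeval_algHom_apply]
      have e5 : Polynomial.aeval (RCLike.ofReal ∘ ha.eigenvalues : Fin n → ℂ) q
          = fun i => q.eval ((ha.eigenvalues i : ℝ) : ℂ) := by
        funext i
        have := Polynomial.aeval_algHom_apply (Pi.evalAlgHom ℂ (fun _ => ℂ) i)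
          (RCLike.ofReal ∘ ha.eigenvalues : Fin n → ℂ) q
        refine Eq.trans this.symm ?_
        exact congrFun (Polynomial.coe_aeval_eq_eval _) q
      rw [e5]
      rfl
    rw [e3]
    have e6 : (fun i => q.eval ((ha.eigenvalues i : ℝ) : ℂ)) = suppDfun a ha := by
      funext i
      have hmem : ((ha.eigenvalues i : ℝ) : ℂ) ∈ V := by
        rw [hV]
        exact Finset.mem_insert_of_mem (Finset.mem_image_of_mem _ (Finset.mem_univ i))
      rw [heval _ hmem, hf]
      unfold suppDfun
      by_cases h : ha.eigenvalues i = 0 <;> simp [h]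
    rw [e6]
    rfl
  rw [← key]
  have : Polynomial.aeval a q ∈ Algebra.adjoin ℂ ({a} : Set (Matrix (Fin n) (Fin n) ℂ)) :=
    Polynomial.aeval_mem_adjoin_singleton ℂ a
  have hle : Algebra.adjoin ℂ ({a} : Set (Matrix (Fin n) (Fin n) ℂ)) ≤ A.toSubalgebra :=
    Algebra.adjoin_le (Set.singleton_subset_iff.mpr haA)
  exact hle this


lemma real_smul_eq (r : ℝ) (M : Matrix (Fin n) (Fin n) ℂ) : r • M = (r:ℂ) • M :=
  (algebraMap_smul ℂ r M).symm

lemma psd_smul_real {M : Matrix (Fin n) (Fin n) ℂ} (hM : M.PosSemidef) {r : ℝ} (hr : 0 ≤ r) :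
    (r • M).PosSemidef := by
  rw [real_smul_eq]
  exact psd_smul hM hr

end helpers


section mainlemmas
open Matrix
variable {n : ℕ} (A : StarSubalgebra ℂ (Matrix (Fin n) (Fin n) ℂ))

/-- The key vanishing condition. -/
def GoodPerp (K : Set (Matrix (Fin n) (Fin n) ℂ)) (s : Matrix (Fin n) (Fin n) ℂ) : Prop :=
  ∀ h : Matrix (Fin n) (Fin n) ℂ, h ∈ A → h.IsHermitian → s * h * s = h →
    (∀ ρ ∈ K, (ρ * h).trace = 0) → h = 0

variable {A}

lemma a_mem_posCoset {K : Set (Matrix (Fin n) (Fin n) ℂ)} {a : Matrix (Fin n) (Fin n) ℂ}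
    (haA : a ∈ A) (haPos : a.PosSemidef) : a ∈ posCoset A K a := by
  refine ⟨haA, haPos, ?_⟩
  rw [sub_self]
  exact ⟨zero_mem A, isHermitian_zero, fun ρ _ => by simp⟩

lemma smul_mem_Kperp {K : Set (Matrix (Fin n) (Fin n) ℂ)} {h : Matrix (Fin n) (Fin n) ℂ}
    (hA : h ∈ A) (hherm : h.IsHermitian) (htr : ∀ ρ ∈ K, (ρ * h).trace = 0) (ε : ℝ) :
    (ε:ℂ) • h ∈ Kperp A K := by
  refine ⟨A.smul_mem hA (ε:ℂ), ?_, fun ρ hρ => ?_⟩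
  · show _ = _
    rw [conjTranspose_smul, hherm.eq]
    congr 1
    simp
  · rw [Matrix.mul_smul, trace_smul, htr ρ hρ, smul_zero]

lemma extreme_iff_goodPerp (K : Set (Matrix (Fin n) (Fin n) ℂ))
    (a : Matrix (Fin n) (Fin n) ℂ) (haA : a ∈ A) (haPos : a.PosSemidef)
    (s : Matrix (Fin n) (Fin n) ℂ) (hs : IsSuppProj a s) :
    a ∈ (posCoset A K a).extremePoints ℝ ↔ GoodPerp A K s := by
  have hscanon : canonSupp a haPos.1 = s := (isSuppProj_canonSupp a haPos.1).unique hs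
  have hsherm : sᴴ = s := hs.1
  have hss : s * s = s := hs.2.1
  have hsa : s * a = a := hs.2.2.1
  have has : a * s = a := by
    have h0 := congrArg conjTranspose hsa
    rwa [conjTranspose_mul, haPos.1.eq, hsherm] at h0
  constructor
  · -- extreme → GoodPerp
    intro hext h hA hherm hsh htr
    obtain ⟨ε, hε0, hp, hm⟩ := exists_eps a haPos h hherm (by rw [hscanon]; exact hsh)
    have hxmem : a + (ε:ℂ) • h ∈ posCoset A K a :=
      ⟨A.add_mem haA (A.smul_mem hA _), hp, by
        rw [add_sub_cancel_left]
        exact smul_mem_Kperp hA hherm htr ε⟩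
    have hymem : a - (ε:ℂ) • h ∈ posCoset A K a :=
      ⟨A.sub_mem haA (A.smul_mem hA _), hm, by
        rw [sub_sub_cancel_left]
        have h2 := smul_mem_Kperp hA hherm htr (-ε)
        rwa [show ((-ε:ℝ):ℂ) = -(ε:ℂ) by push_cast; ring, neg_smul] at h2⟩
    have hseg : a ∈ openSegment ℝ (a + (ε:ℂ) • h) (a - (ε:ℂ) • h) := by
      refine ⟨1/2, 1/2, by norm_num, by norm_num, by norm_num, ?_⟩
      rw [← smul_add]
      rw [show a + (ε:ℂ) • h + (a - (ε:ℂ) • h) = a + a by abel]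
      rw [smul_add, ← add_smul]
      norm_num
    obtain ⟨hx, -⟩ := (mem_extremePoints.mp hext).2 _ hxmem _ hymem hseg
    have : (ε:ℂ) • h = 0 := by
      have := congrArg (fun z => z - a) hx
      simpa using this
    rcases smul_eq_zero.mp this with h1 | h2
    · exact absurd h1 (by exact_mod_cast ne_of_gt hε0)
    · exact h2
  · -- GoodPerp → extreme
    intro hC
    rw [mem_extremePoints]
    refine ⟨a_mem_posCoset haA haPos, ?_⟩
    rintro x hx y hy ⟨t1, t2, ht1, ht2, hts, heq⟩
    obtain ⟨q, hqdef⟩ : ∃ q : Matrix (Fin n) (Fin n) ℂ, q = 1 - s := ⟨_, rfl⟩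
    have hqherm : qᴴ = q := by
      rw [hqdef, conjTranspose_sub, conjTranspose_one, hsherm]
    have hqa : q * a = 0 := by rw [hqdef, Matrix.sub_mul, Matrix.one_mul, hsa, sub_self]
    have haq : a * q = 0 := by rw [hqdef, Matrix.mul_sub, Matrix.mul_one, has, sub_self]
    obtain ⟨hhA, hhherm, hhtr⟩ := hx.2.2
    obtain ⟨hkA, hkherm, hktr⟩ := hy.2.2
    have hlin : t1 • (x - a) + t2 • (y - a) = 0 := by
      have e1 : t1 • (x - a) + t2 • (y - a) = (t1 • x + t2 • y) - (t1 + t2) • a := by module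
      rw [e1, heq, hts, one_smul, sub_self]
    -- q-corner of x and y
    have hqxq : q * x * q = q * (x - a) * q := by
      rw [Matrix.mul_sub, Matrix.sub_mul, hqa, Matrix.zero_mul, sub_zero]
    have hqyq : q * y * q = q * (y - a) * q := by
      rw [Matrix.mul_sub, Matrix.sub_mul, hqa, Matrix.zero_mul, sub_zero]
    have hPx : (q * (x - a) * q).PosSemidef := by
      rw [← hqxq]
      have h3 := hx.2.1.conjTranspose_mul_mul_same q
      rwa [hqherm] at h3
    have hPy : (q * (y - a) * q).PosSemidef := by
      rw [← hqyq]
      have h3 := hy.2.1.conjTranspose_mul_mul_same q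
      rwa [hqherm] at h3
    have hsum0 : t1 • (q * (x - a) * q) + t2 • (q * (y - a) * q) = 0 := by
      have : t1 • (q * (x - a) * q) + t2 • (q * (y - a) * q)
          = q * (t1 • (x - a) + t2 • (y - a)) * q := by
        rw [Matrix.mul_add, Matrix.add_mul]
        rw [Matrix.mul_smul, Matrix.smul_mul, Matrix.mul_smul, Matrix.smul_mul]
      rw [this, hlin, Matrix.mul_zero, Matrix.zero_mul]
    have hneg : (-(q * (x - a) * q)).PosSemidef := by
      have e2 : -(q * (x - a) * q) = (t2 / t1) • (q * (y - a) * q) := by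
        have e3 : t1 • (q * (x - a) * q) = -(t2 • (q * (y - a) * q)) :=
          eq_neg_of_add_eq_zero_left hsum0
        have e4 : (q * (x - a) * q) = (1/t1) • (t1 • (q * (x - a) * q)) := by
          rw [smul_smul, one_div_mul_cancel (ne_of_gt ht1), one_smul]
        rw [e4, e3, smul_neg, neg_neg, smul_smul]
        ring_nf
      rw [e2]
      exact psd_smul_real hPy (le_of_lt (div_pos ht2 ht1))
    have hqhq0 : q * (x - a) * q = 0 := psd_neg_psd_eq_zero hPx hneg
    -- conclude (x - a) q = 0 and q (x - a) = 0
    have hxq : x * q = 0 := by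
      refine psd_conj_zero hx.2.1 hqherm ?_
      rw [hqxq]
      exact hqhq0
    have hhq : (x - a) * q = 0 := by rw [Matrix.sub_mul, hxq, haq, sub_self]
    have hqh : q * (x - a) = 0 := by
      have := congrArg conjTranspose hhq
      rwa [conjTranspose_mul, hqherm, hhherm.eq, conjTranspose_zero] at this
    have hshs : s * (x - a) * s = x - a := by
      have e5 : s = 1 - q := by rw [hqdef, sub_sub_cancel]
      rw [e5, Matrix.sub_mul, Matrix.one_mul, hqh, sub_zero, Matrix.mul_sub, Matrix.mul_one,
        hhq, sub_zero]
    have hx0 : x - a = 0 := hC _ hhA hhherm hshs hhtr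
    have hxa : x = a := by rwa [sub_eq_zero] at hx0
    refine ⟨hxa, ?_⟩
    rw [hx0, smul_zero, zero_add] at hlin
    have hy0 : y - a = 0 := by
      rcases smul_eq_zero.mp hlin with h1 | h2
      · exact absurd h1 (ne_of_gt ht2)
      · exact h2
    rwa [sub_eq_zero] at hy0

end mainlemmas


section dimlemmas
open Matrix
variable {n : ℕ} {A : StarSubalgebra ℂ (Matrix (Fin n) (Fin n) ℂ)}

/-- The real bilinear trace form `⟨x, y⟩ = Re Tr(xᴴ y)`. -/
noncomputable def phiR : Matrix (Fin n) (Fin n) ℂ →ₗ[ℝ] Matrix (Fin n) (Fin n) ℂ →ₗ[ℝ] ℝ :=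
  LinearMap.mk₂ ℝ (fun x y => ((xᴴ * y).trace).re)
    (fun x x' y => by
      show (((x + x')ᴴ * y).trace).re = ((xᴴ * y).trace).re + ((x'ᴴ * y).trace).re
      rw [conjTranspose_add, Matrix.add_mul, trace_add, Complex.add_re])
    (fun c x y => by
      show (((c • x)ᴴ * y).trace).re = c • ((xᴴ * y).trace).re
      rw [real_smul_eq, conjTranspose_smul, Matrix.smul_mul, trace_smul]
      simp [Complex.mul_re])
    (fun x y y' => by
      show ((xᴴ * (y + y')).trace).re = ((xᴴ * y).trace).re + ((xᴴ * y').trace).re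
      rw [Matrix.mul_add, trace_add, Complex.add_re])
    (fun c x y => by
      show ((xᴴ * (c • y)).trace).re = c • ((xᴴ * y).trace).re
      rw [real_smul_eq, Matrix.mul_smul, trace_smul]
      simp [Complex.mul_re])

/-- The pairing map into the dual. -/
noncomputable def Lmap (V1 V2 : Submodule ℝ (Matrix (Fin n) (Fin n) ℂ)) :
    V2 →ₗ[ℝ] Module.Dual ℝ V1 where
  toFun z := (phiR.flip z.1).comp V1.subtype
  map_add' z w := by ext v; simp
  map_smul' c z := by ext v; simp

lemma Lmap_apply (V1 V2 : Submodule ℝ (Matrix (Fin n) (Fin n) ℂ)) (z : V2) (v : V1) :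
    Lmap V1 V2 z v = phiR v.1 z.1 := rfl

lemma phiR_apply (x y : Matrix (Fin n) (Fin n) ℂ) : phiR x y = ((xᴴ * y).trace).re := rfl

lemma herm_trace_eq_zero {x h : Matrix (Fin n) (Fin n) ℂ} (hx : x.IsHermitian)
    (hh : h.IsHermitian) (hre : ((x * h).trace).re = 0) : (x * h).trace = 0 := by
  have hconj : (starRingEnd ℂ) ((x * h).trace) = (x * h).trace := by
    calc (starRingEnd ℂ) ((x * h).trace) = ((x * h)ᴴ).trace := (trace_conjTranspose _).symm
      _ = (hᴴ * xᴴ).trace := by rw [conjTranspose_mul]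
      _ = (h * x).trace := by rw [hh.eq, hx.eq]
      _ = (x * h).trace := trace_mul_comm h x
  have him : ((x * h).trace).im = 0 := Complex.conj_eq_iff_im.mp hconj
  exact Complex.ext hre him

lemma trace_conj_shift {s z : Matrix (Fin n) (Fin n) ℂ} (ρ : Matrix (Fin n) (Fin n) ℂ)
    (hz : s * z * s = z) : ((s * ρ * s) * z).trace = (ρ * z).trace := by
  calc ((s * ρ * s) * z).trace = (s * (ρ * (s * z))).trace := by
        simp only [Matrix.mul_assoc]
    _ = ((ρ * (s * z)) * s).trace := trace_mul_comm _ _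
    _ = (ρ * (s * z * s)).trace := by simp only [Matrix.mul_assoc]
    _ = (ρ * z).trace := by rw [hz]

lemma mem_Jset_of_mem_K {K : Set (Matrix (Fin n) (Fin n) ℂ)} {ρ : Matrix (Fin n) (Fin n) ℂ}
    (hρ : ρ ∈ K) : ρ ∈ Jset K := by
  refine ⟨ρ, ⟨1, zero_le_one, ρ, hρ, (one_smul ℝ ρ).symm⟩,
    0, ⟨0, le_rfl, ρ, hρ, (zero_smul ℝ ρ).symm⟩, (sub_zero ρ).symm⟩

lemma Qset_props {K : Set (Matrix (Fin n) (Fin n) ℂ)} (hKsub : K ⊆ States A)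
    {y : Matrix (Fin n) (Fin n) ℂ} (hy : y ∈ Qset K) :
    y ∈ A ∧ y.IsHermitian ∧ ∀ h : Matrix (Fin n) (Fin n) ℂ,
      (∀ ρ ∈ K, (ρ * h).trace = 0) → (y * h).trace = 0 := by
  obtain ⟨t, ht, ρ, hρ, rfl⟩ := hy
  obtain ⟨hρA, hρPos, -⟩ := hKsub hρ
  refine ⟨?_, ?_, ?_⟩
  · rw [real_smul_eq]
    exact A.smul_mem hρA _
  · show _ = _
    rw [real_smul_eq, conjTranspose_smul, hρPos.1.eq]
    congr 1
    simp
  · intro h htr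
    rw [Matrix.smul_mul, trace_smul, htr ρ hρ, smul_zero]

lemma Jset_props {K : Set (Matrix (Fin n) (Fin n) ℂ)} (hKsub : K ⊆ States A)
    {x : Matrix (Fin n) (Fin n) ℂ} (hx : x ∈ Jset K) :
    x ∈ A ∧ x.IsHermitian ∧ ∀ h : Matrix (Fin n) (Fin n) ℂ,
      (∀ ρ ∈ K, (ρ * h).trace = 0) → (x * h).trace = 0 := by
  obtain ⟨y, hy, z, hz, rfl⟩ := hx
  obtain ⟨hyA, hyH, hyT⟩ := Qset_props hKsub hy
  obtain ⟨hzA, hzH, hzT⟩ := Qset_props hKsub hz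
  refine ⟨A.sub_mem hyA hzA, ?_, ?_⟩
  · show _ = _
    rw [conjTranspose_sub, hyH.eq, hzH.eq]
  · intro h htr
    rw [Matrix.sub_mul, trace_sub, hyT h htr, hzT h htr, sub_self]

lemma goodPerp_iff_dim (K : Set (Matrix (Fin n) (Fin n) ℂ)) (hKsub : K ⊆ States A)
    (a : Matrix (Fin n) (Fin n) ℂ) (haA : a ∈ A) (haPos : a.PosSemidef)
    (s : Matrix (Fin n) (Fin n) ℂ) (hs : IsSuppProj a s) :
    GoodPerp A K s ↔
      Module.finrank ℝ (Submodule.span ℝ ((fun x => s * x * s) '' Jset K)) =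
        Module.finrank ℝ (Submodule.span ℝ
          ((fun x => s * x * s) '' {x : Matrix (Fin n) (Fin n) ℂ | x ∈ A ∧ x.IsHermitian})) := by
  have hscanon : canonSupp a haPos.1 = s := (isSuppProj_canonSupp a haPos.1).unique hs
  have hsA : s ∈ A := by rw [← hscanon]; exact canonSupp_mem A a haPos.1 haA
  have hsherm : sᴴ = s := hs.1
  have hss : s * s = s := hs.2.1
  set V1 := Submodule.span ℝ ((fun x => s * x * s) '' Jset K) with hV1
  set V2 := Submodule.span ℝ
    ((fun x => s * x * s) '' {x : Matrix (Fin n) (Fin n) ℂ | x ∈ A ∧ x.IsHermitian}) with hV2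
  haveI : FiniteDimensional ℝ ℂ := inferInstance
  haveI hFD : FiniteDimensional ℝ (Matrix (Fin n) (Fin n) ℂ) :=
    Module.Finite.trans (R := ℝ) ℂ (Matrix (Fin n) (Fin n) ℂ)
  -- V1 ≤ V2
  have hsub : V1 ≤ V2 := by
    rw [hV1]
    refine Submodule.span_le.mpr ?_
    rintro - ⟨x, hx, rfl⟩
    exact Submodule.subset_span ⟨x, ⟨(Jset_props hKsub hx).1, (Jset_props hKsub hx).2.1⟩, rfl⟩
  -- elements of V2 are hermitian, in A, supported by s
  have hV2props : ∀ z, z ∈ V2 → z ∈ A ∧ z.IsHermitian ∧ s * z * s = z := by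
    intro z hz
    refine Submodule.span_induction ?_ ?_ ?_ ?_ hz
    · rintro - ⟨x, ⟨hxA, hxH⟩, rfl⟩
      dsimp only
      refine ⟨A.mul_mem (A.mul_mem hsA hxA) hsA, ?_, ?_⟩
      · show _ = _
        rw [conjTranspose_mul, conjTranspose_mul, hsherm, hxH.eq, Matrix.mul_assoc]
      · calc s * (s * x * s) * s = (s * s) * x * (s * s) := by simp only [Matrix.mul_assoc]
          _ = s * x * s := by rw [hss]
    · exact ⟨zero_mem A, isHermitian_zero, by simp⟩
    · rintro x y - - ⟨hxA, hxH, hxs⟩ ⟨hyA, hyH, hys⟩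
      exact ⟨A.add_mem hxA hyA, hxH.add hyH, by
        rw [Matrix.mul_add, Matrix.add_mul, hxs, hys]⟩
    · rintro c x - ⟨hxA, hxH, hxs⟩
      refine ⟨by rw [real_smul_eq]; exact A.smul_mem hxA _, ?_, ?_⟩
      · show _ = _
        rw [real_smul_eq, conjTranspose_smul, hxH.eq]
        congr 1
        simp
      · rw [Matrix.mul_smul, Matrix.smul_mul, hxs]
  -- membership of s ρ s in V1 for ρ ∈ K
  have hV1gen : ∀ ρ ∈ K, s * ρ * s ∈ V1 := fun ρ hρ =>
    Submodule.subset_span ⟨ρ, mem_Jset_of_mem_K hρ, rfl⟩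
  constructor
  · -- GoodPerp → dims equal
    intro hC
    refine le_antisymm (Submodule.finrank_mono hsub) ?_
    by_contra hcon
    have hlt : Module.finrank ℝ V1 < Module.finrank ℝ V2 := lt_of_not_ge hcon
    have hninj : ¬ Function.Injective (Lmap V1 V2) := by
      intro hinj
      have hle := LinearMap.finrank_le_finrank_of_injective hinj
      rw [Subspace.dual_finrank_eq] at hle
      omega
    rw [← LinearMap.ker_eq_bot] at hninj
    obtain ⟨z, hzker, hz0⟩ := Submodule.ne_bot_iff _ |>.mp hninj
    obtain ⟨hzA, hzH, hzs⟩ := hV2props z.1 z.2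
    have htr : ∀ ρ ∈ K, (ρ * z.1).trace = 0 := by
      intro ρ hρ
      have hρH : ρ.IsHermitian := (hKsub hρ).2.1.1
      have hv0 := DFunLike.congr_fun (LinearMap.mem_ker.mp hzker) ⟨s * ρ * s, hV1gen ρ hρ⟩
      rw [Lmap_apply] at hv0
      simp only [LinearMap.zero_apply] at hv0
      have hv : ((s * ρ * s)ᴴ * z.1).trace.re = 0 := hv0
      have hherm : (s * ρ * s)ᴴ = s * ρ * s := by
        rw [conjTranspose_mul, conjTranspose_mul, hsherm, hρH.eq, Matrix.mul_assoc]
      rw [hherm, trace_conj_shift ρ hzs] at hv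
      exact herm_trace_eq_zero hρH hzH hv
    have : z.1 = 0 := hC z.1 hzA hzH hzs htr
    exact hz0 (by exact Subtype.ext this)
  · -- dims equal → GoodPerp
    intro hdim h hA hherm hshs htr
    have hVeq : V1 = V2 := Submodule.eq_of_le_of_finrank_le hsub (le_of_eq hdim.symm)
    have hmem : h ∈ V1 := by
      rw [hVeq]
      exact Submodule.subset_span ⟨h, ⟨hA, hherm⟩, hshs⟩
    have hker : V1 ≤ LinearMap.ker (phiR.flip h) := by
      rw [hV1]
      refine Submodule.span_le.mpr ?_
      rintro - ⟨x, hx, rfl⟩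
      obtain ⟨-, hxH, hxT⟩ := Jset_props hKsub hx
      rw [SetLike.mem_coe, LinearMap.mem_ker, LinearMap.flip_apply, phiR_apply]
      have hherm2 : (s * x * s)ᴴ = s * x * s := by
        rw [conjTranspose_mul, conjTranspose_mul, hsherm, hxH.eq, Matrix.mul_assoc]
      rw [hherm2, trace_conj_shift x hshs, hxT h htr]
      simp
    have hzero : phiR h h = 0 := by
      have := hker hmem
      rw [LinearMap.mem_ker, LinearMap.flip_apply] at this
      exact this
    rw [phiR_apply] at hzero
    exact eq_zero_of_trace_conj_self hzero

end dimlemmas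

/-- For a closed convex `K ⊆ 𝔖(A)` and `a ∈ A⁺` with support projection `s`,
`a` is an extreme point of `(a + K^⊥)⁺` iff `dim_ℝ (s J s) = dim_ℝ (s A^h s)`. -/
theorem extreme_in_posCoset_iff_dim
    (K : Set (Matrix (Fin n) (Fin n) ℂ))
    (hKsub : K ⊆ States A) (hKconv : Convex ℝ K) (hKcl : IsClosed K)
    (a : Matrix (Fin n) (Fin n) ℂ) (haA : a ∈ A) (haPos : a.PosSemidef)
    (s : Matrix (Fin n) (Fin n) ℂ) (hs : IsSuppProj a s) :
    a ∈ (posCoset A K a).extremePoints ℝ ↔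
      Module.finrank ℝ (Submodule.span ℝ ((fun x => s * x * s) '' Jset K)) =
        Module.finrank ℝ (Submodule.span ℝ
          ((fun x => s * x * s) '' {x : Matrix (Fin n) (Fin n) ℂ | x ∈ A ∧ x.IsHermitian})) := by
  rw [extreme_iff_goodPerp K a haA haPos s hs]
  exact goodPerp_iff_dim K hKsub a haA haPos s hs
end

section
/- Let H and K be finite-dimensional complex Hilbert spaces, σ a full-rank state on H, and W = {I_K ⊗ y : y a self-adjoint operator on H with Tr(σ y) = 0}. Let a be a positive operator on K ⊗ H. If rank(a) < dim(K), then the only positive operator b on K ⊗ H with b − a ∈ W is b = a. -/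
open scoped ComplexOrder Kronecker Matrix

variable {m : Type*} [Fintype m] [DecidableEq m]

variable {dH dK : ℕ}

/-- The partial trace over the first (i.e. `K`) factor of `B(K ⊗ H)`. -/
noncomputable def ptraceK (X : Matrix (Fin dK × Fin dH) (Fin dK × Fin dH) ℂ) :
    Matrix (Fin dH) (Fin dH) ℂ :=
  Matrix.of fun i j => ∑ a : Fin dK, X (a, i) (a, j)

/-- The set `T(H,K,U)` of quantum 1-testers: families of positive operators on `K ⊗ H`
summing to `I_K ⊗ σ` for some state `σ` on `H`. -/
def Testers (dH dK : ℕ) (U : Type*) [Fintype U] :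
    Set (U → Matrix (Fin dK × Fin dH) (Fin dK × Fin dH) ℂ) :=
  {N | (∀ u, (N u).PosSemidef) ∧
    ∃ σ : Matrix (Fin dH) (Fin dH) ℂ, σ.PosSemidef ∧ σ.trace = 1 ∧
      ∑ u, N u = (1 : Matrix (Fin dK) (Fin dK) ℂ) ⊗ₖ σ}

/-- `C(H,K)`: the set of Choi matrices of channels `B(H) → B(K)`. -/
def ChoiSet (dH dK : ℕ) : Set (Matrix (Fin dK × Fin dH) (Fin dK × Fin dH) ℂ) :=
  {X | X.PosSemidef ∧ ptraceK X = 1}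

lemma kron_conjTranspose' {l m n p : Type*} (A : Matrix l m ℂ) (B : Matrix n p ℂ) :
    (A ⊗ₖ B)ᴴ = Aᴴ ⊗ₖ Bᴴ := by
  ext ⟨i, j⟩ ⟨k, l⟩
  simp [Matrix.conjTranspose_apply, Matrix.kroneckerMap_apply, mul_comm]

lemma col_compress' (v : Fin dH → ℂ) (y : Matrix (Fin dH) (Fin dH) ℂ) :
    (Matrix.replicateCol (Fin 1) v)ᴴ * y * Matrix.replicateCol (Fin 1) v
      = (star v ⬝ᵥ y *ᵥ v) • (1 : Matrix (Fin 1) (Fin 1) ℂ) := by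
  ext i j
  fin_cases i; fin_cases j
  simp only [Matrix.mul_apply, dotProduct, Matrix.mulVec, Matrix.replicateCol,
    Matrix.conjTranspose_apply, Matrix.of_apply, Matrix.smul_apply, Matrix.one_apply_eq,
    smul_eq_mul, mul_one, Finset.mul_sum, Finset.sum_mul, Pi.star_apply]
  rw [Finset.sum_comm]
  exact Finset.sum_congr rfl fun i _ => Finset.sum_congr rfl fun j _ => by ring

/-- A Hermitian quadratic form value is fixed by `star`. -/
lemma herm_quad_real {n : Type*} [Fintype n] {y : Matrix n n ℂ} (hy : y.IsHermitian)
    (v : n → ℂ) : star (star v ⬝ᵥ y *ᵥ v) = star v ⬝ᵥ y *ᵥ v := by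
  conv_lhs => rw [Matrix.star_dotProduct]
  rw [star_star, Matrix.star_mulVec, ← Matrix.dotProduct_mulVec, hy.eq]

/-- A PSD matrix with `Tr (σ * y) = 0` for positive-definite `σ` is zero. -/
lemma psd_trace_posdef_zero {n : Type*} [Fintype n] [DecidableEq n]
    {σ y : Matrix n n ℂ} (hσ : σ.PosDef) (hy : y.PosSemidef)
    (htr : (σ * y).trace = 0) : y = 0 := by
  open scoped MatrixOrder Matrix.Norms.L2Operator in
  obtain ⟨C, hC⟩ := CStarAlgebra.nonneg_iff_eq_star_mul_self.mp hy.nonneg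
  rw [Matrix.star_eq_conjTranspose] at hC
  have hD : (C * σ * Cᴴ).PosSemidef := hσ.posSemidef.mul_mul_conjTranspose_same C
  have hDtr : (C * σ * Cᴴ).trace = 0 := by
    rw [Matrix.trace_mul_cycle, Matrix.trace_mul_comm, ← hC, htr]
  -- each diagonal entry is a value of the quadratic form of σ
  have hdiag : ∀ i, (C * σ * Cᴴ) i i = star (star (C i)) ⬝ᵥ σ *ᵥ (star (C i)) := by
    intro i
    simp only [Matrix.mul_apply, Matrix.conjTranspose_apply, dotProduct,
      Matrix.mulVec, Pi.star_apply, star_star, Finset.mul_sum, Finset.sum_mul]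
    rw [Finset.sum_comm]
    exact Finset.sum_congr rfl fun a _ => Finset.sum_congr rfl fun b _ => by ring
  have hnonneg : ∀ i ∈ Finset.univ, (0:ℂ) ≤ (C * σ * Cᴴ) i i := by
    intro i _
    rw [hdiag]
    exact hσ.posSemidef.dotProduct_mulVec_nonneg _
  have hzero : ∀ i ∈ (Finset.univ : Finset n), (C * σ * Cᴴ) i i = 0 :=
    (Finset.sum_eq_zero_iff_of_nonneg hnonneg).mp hDtr
  have hCrow : ∀ i, star (C i) = 0 := by
    intro i
    by_contra h
    have := hσ.dotProduct_mulVec_pos h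
    rw [← hdiag i, hzero i (Finset.mem_univ i)] at this
    exact lt_irrefl _ this
  have hC0 : C = 0 := by
    ext i j
    have := congrFun (hCrow i) j
    simpa using congrArg star this
  rw [hC, hC0]
  simp


/-- Let `σ` be a full-rank state on `H` and
`W = {I_K ⊗ y : y = y*, Tr(σ y) = 0}`. If `a ≥ 0` on `K ⊗ H` has `rank a < dim K`, then the
only positive operator `b` with `b - a ∈ W` is `b = a`. -/
theorem low_rank_unique_in_class
    (σ : Matrix (Fin dH) (Fin dH) ℂ) (hσ : σ.PosDef) (hσtr : σ.trace = 1)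
    (a : Matrix (Fin dK × Fin dH) (Fin dK × Fin dH) ℂ) (ha : a.PosSemidef)
    (hrank : a.rank < dK) :
    ∀ b : Matrix (Fin dK × Fin dH) (Fin dK × Fin dH) ℂ, b.PosSemidef →
      (∃ y : Matrix (Fin dH) (Fin dH) ℂ, y.IsHermitian ∧ (σ * y).trace = 0 ∧
        b - a = (1 : Matrix (Fin dK) (Fin dK) ℂ) ⊗ₖ y) →
      b = a := by
  rintro b hb ⟨y, hyH, hytr, hba⟩
  have hbeq : b = (1 : Matrix (Fin dK) (Fin dK) ℂ) ⊗ₖ y + a := by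
    rw [← hba]; exact (sub_add_cancel b a).symm
  -- Step 1: y is positive semidefinite
  have hy_psd : y.PosSemidef := by
    refine Matrix.PosSemidef.of_dotProduct_mulVec_nonneg hyH fun v => ?_
    by_contra hc
    set c := star v ⬝ᵥ y *ᵥ v with hc_def
    have him : c.im = 0 := Complex.conj_eq_iff_im.mp (herm_quad_real hyH v)
    have hcneg : c < 0 := by
      rw [Complex.lt_def]
      refine ⟨?_, by simp [him]⟩
      by_contra h
      exact hc (Complex.le_def.mpr ⟨le_of_not_gt h, by simp [him]⟩)
    set V : Matrix (Fin dK × Fin dH) (Fin dK × Fin 1) ℂ :=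
      (1 : Matrix (Fin dK) (Fin dK) ℂ) ⊗ₖ Matrix.replicateCol (Fin 1) v with hV
    have hVy : Vᴴ * ((1 : Matrix (Fin dK) (Fin dK) ℂ) ⊗ₖ y) * V
        = c • (1 : Matrix (Fin dK × Fin 1) (Fin dK × Fin 1) ℂ) := by
      rw [hV, kron_conjTranspose', Matrix.conjTranspose_one,
        ← Matrix.mul_kronecker_mul, ← Matrix.mul_kronecker_mul, Matrix.one_mul,
        Matrix.mul_one, col_compress', Matrix.kronecker_smul, Matrix.one_kronecker_one]
    have hA : (Vᴴ * a * V).PosSemidef := ha.conjTranspose_mul_mul_same V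
    have hB : (Vᴴ * b * V).PosSemidef := hb.conjTranspose_mul_mul_same V
    have hBV : Vᴴ * b * V = c • 1 + Vᴴ * a * V := by
      rw [hbeq, Matrix.mul_add, Matrix.add_mul, hVy]
    have hPD : ((-c) • (1 : Matrix (Fin dK × Fin 1) (Fin dK × Fin 1) ℂ)).PosDef := by
      refine Matrix.PosDef.of_dotProduct_mulVec_pos ?_ fun x hx => ?_
      · rw [Matrix.IsHermitian, Matrix.conjTranspose_smul, Matrix.conjTranspose_one]
        congr 1
        rw [Complex.star_def, Complex.conj_eq_iff_im]
        simp [him]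
      · rw [Matrix.smul_mulVec, Matrix.one_mulVec, dotProduct_smul,
          smul_eq_mul]
        exact mul_pos (by simpa using neg_pos.mpr hcneg)
          (Matrix.dotProduct_star_self_pos_iff.mpr hx)
    have hApd : (Vᴴ * a * V).PosDef := by
      have := Matrix.PosDef.posSemidef_add hB hPD
      have heq : Vᴴ * b * V + (-c) • 1 = Vᴴ * a * V := by
        rw [hBV]; module
      rwa [heq] at this
    have h1 : (Vᴴ * a * V).rank = dK := by
      rw [Matrix.rank_of_isUnit _ hApd.isUnit]
      simp
    have h2 : (Vᴴ * a * V).rank ≤ a.rank :=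
      le_trans (Matrix.rank_mul_le_left _ _) (Matrix.rank_mul_le_right _ _)
    omega
  -- Step 2: y = 0
  have hy0 : y = 0 := psd_trace_posdef_zero hσ hy_psd hytr
  have : b - a = 0 := by rw [hba, hy0, Matrix.kronecker_zero]
  exact sub_eq_zero.mp this
end

section
/- Let H and K be two-dimensional complex Hilbert spaces (dim H = dim K = 2), σ a full-rank state on H, and W = {I_K ⊗ y : y a self-adjoint operator on H with Tr(σ y) = 0}. Let a be a positive operator on K ⊗ H. Then there exists a positive operator b ≠ a on K ⊗ H with b − a ∈ W if and only if the largest support projection among elements of {b ∈ B(K⊗H)⁺ : b − a ∈ W} is the identity I_{K⊗H} (equivalently, some positive b with b − a ∈ W has full rank 4). -/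
open scoped ComplexOrder Kronecker Matrix

variable {m : Type*} [Fintype m] [DecidableEq m]

variable {dH dK : ℕ}

open Matrix

-- smul of psd by nonneg real
lemma smul_psd {n : Type*} [Fintype n] {M : Matrix n n ℂ} (hM : M.PosSemidef)
    {r : ℝ} (hr : 0 ≤ r) : (((r : ℂ)) • M).PosSemidef := by
  refine Matrix.PosSemidef.of_dotProduct_mulVec_nonneg ?_ ?_
  · have hs : star ((r : ℂ)) = (r : ℂ) := by simp
    rw [Matrix.IsHermitian, Matrix.conjTranspose_smul, hs, hM.1]
  · intro x
    rw [Matrix.smul_mulVec, dotProduct_smul, smul_eq_mul]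
    exact mul_nonneg (by exact_mod_cast Complex.zero_le_real.mpr hr) (hM.dotProduct_mulVec_nonneg x)

lemma posDef_diag_entry {n : Type*} [Fintype n] [DecidableEq n] {M : Matrix n n ℂ}
    (hM : M.PosDef) (i : n) : 0 < M i i := by
  have hx : (Pi.single i (1:ℂ)) ≠ (0 : n → ℂ) := by
    intro h0
    have := congrFun h0 i
    simp at this
  have h := hM.dotProduct_mulVec_pos hx
  simpa [dotProduct, Matrix.mulVec, Pi.single_apply, apply_ite,
    Finset.sum_ite_eq, Finset.sum_ite_eq'] using h

lemma key_det {σ y : Matrix (Fin 2) (Fin 2) ℂ} (hσ : σ.PosDef) (hy : y.IsHermitian)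
    (htr : (σ * y).trace = 0) (hne : y ≠ 0) : y.det ≠ 0 := by
  set V : Matrix (Fin 2) (Fin 2) ℂ := (hy.eigenvectorUnitary : Matrix (Fin 2) (Fin 2) ℂ) with hV
  set D : Matrix (Fin 2) (Fin 2) ℂ := Matrix.diagonal (RCLike.ofReal ∘ hy.eigenvalues) with hD
  have hspec : y = V * D * Vᴴ := by
    rw [hV, hD, ← Matrix.star_eq_conjTranspose]
    exact hy.spectral_theorem
  have hVV : Vᴴ * V = 1 := by
    rw [hV, ← Matrix.star_eq_conjTranspose]
    exact Unitary.coe_star_mul_self _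
  set τ := Vᴴ * σ * V with hτ
  have hτpd : τ.PosDef := by
    refine Matrix.PosDef.of_dotProduct_mulVec_pos (Matrix.isHermitian_conjTranspose_mul_mul _ hσ.1) fun x hx => ?_
    have hVx : V *ᵥ x ≠ 0 := by
      intro h0
      apply hx
      have := congrArg (fun w => Vᴴ *ᵥ w) h0
      simpa only [Matrix.mulVec_mulVec, hVV, Matrix.one_mulVec, Matrix.mulVec_zero] using this
    simpa only [hτ, Matrix.star_mulVec, Matrix.dotProduct_mulVec, Matrix.vecMul_vecMul]
      using hσ.dotProduct_mulVec_pos hVx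
  have hτ0 : (0:ℂ) < τ 0 0 := posDef_diag_entry hτpd 0
  have hτ1 : (0:ℂ) < τ 1 1 := posDef_diag_entry hτpd 1
  have h1 : (σ * y).trace = (τ * D).trace := by
    rw [hspec, show σ * (V * D * Vᴴ) = (σ * V * D) * Vᴴ by simp only [mul_assoc],
      Matrix.trace_mul_comm, show Vᴴ * (σ * V * D) = (Vᴴ * σ * V) * D by simp only [mul_assoc]]
  have h2 : τ 0 0 * (hy.eigenvalues 0 : ℂ) + τ 1 1 * (hy.eigenvalues 1 : ℂ) = 0 := by
    rw [← htr, h1, hD]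
    simp [Matrix.trace, Matrix.diag, Matrix.mul_diagonal, Fin.sum_univ_two]
  intro hdet
  rw [hy.det_eq_prod_eigenvalues, Fin.prod_univ_two, mul_eq_zero,
    RCLike.ofReal_eq_zero, RCLike.ofReal_eq_zero] at hdet
  have hboth : hy.eigenvalues 0 = 0 ∧ hy.eigenvalues 1 = 0 := by
    rcases hdet with h0 | h0
    · refine ⟨h0, ?_⟩
      rw [h0] at h2
      simp only [Complex.ofReal_zero, mul_zero, zero_add, mul_eq_zero] at h2
      exact_mod_cast h2.resolve_left hτ1.ne'
    · refine ⟨?_, h0⟩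
      rw [h0] at h2
      simp only [Complex.ofReal_zero, mul_zero, add_zero, mul_eq_zero] at h2
      exact_mod_cast h2.resolve_left hτ0.ne'
  apply hne
  have hDzero : D = 0 := by
    rw [hD]
    have : (RCLike.ofReal ∘ hy.eigenvalues : Fin 2 → ℂ) = fun _ => 0 := by
      funext i
      fin_cases i
      · simp [hboth.1]
      · simp [hboth.2]
    rw [this]
    simp [Matrix.diagonal_zero]
  rw [hspec, hDzero, mul_zero, zero_mul]


/-- Let `dim H = dim K = 2`, `σ` a full-rank state on `H`, and
`W = {I_K ⊗ y : y = y*, Tr(σ y) = 0}`. For positive `a` on `K ⊗ H`, there exists a positive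
`b ≠ a` with `b - a ∈ W` iff some positive `b'` with `b' - a ∈ W` has full rank `4`
(i.e. the largest support projection in the class of `a` is the identity). -/
theorem qubit_not_unique_iff_full_Ksupport
    (σ : Matrix (Fin 2) (Fin 2) ℂ) (hσ : σ.PosDef) (hσtr : σ.trace = 1)
    (a : Matrix (Fin 2 × Fin 2) (Fin 2 × Fin 2) ℂ) (ha : a.PosSemidef) :
    (∃ b : Matrix (Fin 2 × Fin 2) (Fin 2 × Fin 2) ℂ, b.PosSemidef ∧ b ≠ a ∧
      ∃ y : Matrix (Fin 2) (Fin 2) ℂ, y.IsHermitian ∧ (σ * y).trace = 0 ∧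
        b - a = (1 : Matrix (Fin 2) (Fin 2) ℂ) ⊗ₖ y) ↔
    (∃ b : Matrix (Fin 2 × Fin 2) (Fin 2 × Fin 2) ℂ, b.PosSemidef ∧ b.rank = 4 ∧
      ∃ y : Matrix (Fin 2) (Fin 2) ℂ, y.IsHermitian ∧ (σ * y).trace = 0 ∧
        b - a = (1 : Matrix (Fin 2) (Fin 2) ℂ) ⊗ₖ y) := by
  constructor
  · rintro ⟨b, hb, hne, y, hy, htr, hdiff⟩
    have hy0 : y ≠ 0 := by
      rintro rfl
      rw [Matrix.kronecker_zero] at hdiff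
      exact hne (by rwa [sub_eq_zero] at hdiff)
    have hdet := key_det hσ hy htr hy0
    have hdetK : ((1 : Matrix (Fin 2) (Fin 2) ℂ) ⊗ₖ y).det ≠ 0 := by
      rw [Matrix.det_kronecker]
      simp [hdet]
    have hunit : IsUnit ((1 : Matrix (Fin 2) (Fin 2) ℂ) ⊗ₖ y) :=
      (Matrix.isUnit_iff_isUnit_det _).2 hdetK.isUnit
    set c := a + (1 : Matrix (Fin 2) (Fin 2) ℂ) ⊗ₖ ((1/2 : ℂ) • y) with hc
    have hceq : c = (((1/2 : ℝ) : ℂ)) • (a + b) := by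
      rw [hc, Matrix.kronecker_smul, ← hdiff]
      have h2 : a = (1/2 : ℂ) • a + (1/2 : ℂ) • a := by
        rw [← add_smul]; norm_num
      push_cast
      rw [smul_sub, smul_add]
      nth_rewrite 1 [h2]
      abel
    have hcpsd : c.PosSemidef := by
      rw [hceq]; exact smul_psd (ha.add hb) (by norm_num)
    have hker : ∀ x : Fin 2 × Fin 2 → ℂ, c *ᵥ x = 0 → x = 0 := by
      intro x hx
      have hab : (a + b) *ᵥ x = 0 := by
        have h0 : (((1/2 : ℝ) : ℂ)) • ((a + b) *ᵥ x) = 0 := by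
          rw [← Matrix.smul_mulVec, ← hceq, hx]
        have := smul_eq_zero.mp h0
        simpa using this
      have h3 : star x ⬝ᵥ a *ᵥ x + star x ⬝ᵥ b *ᵥ x = 0 := by
        rw [← dotProduct_add, ← Matrix.add_mulVec, hab, dotProduct_zero]
      have h4 := (add_eq_zero_iff_of_nonneg (ha.dotProduct_mulVec_nonneg x) (hb.dotProduct_mulVec_nonneg x)).mp h3
      have hax : a *ᵥ x = 0 := (ha.dotProduct_mulVec_zero_iff x).mp h4.1
      have hbx : b *ᵥ x = 0 := (hb.dotProduct_mulVec_zero_iff x).mp h4.2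
      have h5 : ((1 : Matrix (Fin 2) (Fin 2) ℂ) ⊗ₖ y) *ᵥ x = 0 := by
        rw [← hdiff, Matrix.sub_mulVec, hax, hbx, sub_zero]
      exact Matrix.mulVec_injective_iff_isUnit.mpr hunit (by rw [h5, Matrix.mulVec_zero])
    have hcpd : c.PosDef := by
      refine Matrix.PosDef.of_dotProduct_mulVec_pos hcpsd.1 fun x hx => (hcpsd.dotProduct_mulVec_nonneg x).lt_of_ne' fun h0 => hx ?_
      exact hker x ((hcpsd.dotProduct_mulVec_zero_iff x).mp h0)
    refine ⟨c, hcpsd, ?_, (1/2 : ℂ) • y, ?_, ?_, ?_⟩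
    · rw [Matrix.rank_of_isUnit c hcpd.isUnit]
      simp
    · have hs : star ((1/2 : ℂ)) = (1/2 : ℂ) := by simp
      rw [Matrix.IsHermitian, Matrix.conjTranspose_smul, hs, hy.eq]
    · rw [Matrix.mul_smul, Matrix.trace_smul, htr, smul_zero]
    · rw [hc]; exact add_sub_cancel_left _ _
  · rintro ⟨b, hb, hrank, y, hy, htr, hdiff⟩
    by_cases hy0 : y = 0
    · -- b = a, so a has full rank; perturb a.
      subst hy0
      rw [Matrix.kronecker_zero] at hdiff
      have hba : b = a := by rwa [sub_eq_zero] at hdiff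
      subst hba
      have hA : b.IsHermitian := ha.1
      have hnz : ∀ i, hA.eigenvalues i ≠ 0 := by
        intro i h0
        have hcard := hA.rank_eq_card_non_zero_eigs
        rw [hrank] at hcard
        have hlt : Fintype.card {j // hA.eigenvalues j ≠ 0} <
            Fintype.card (Fin 2 × Fin 2) :=
          Fintype.card_subtype_lt (x := i) (by simpa using h0)
        rw [← hcard] at hlt
        simp at hlt
      have hpos : ∀ i, 0 < hA.eigenvalues i := fun i =>
        (ha.eigenvalues_nonneg i).lt_of_ne' (hnz i)
      set μ : ℝ := Finset.univ.inf' Finset.univ_nonempty hA.eigenvalues with hμ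
      have hμpos : 0 < μ := by
        rw [hμ, Finset.lt_inf'_iff]
        exact fun i _ => hpos i
      have hμle : ∀ i, μ ≤ hA.eigenvalues i := fun i =>
        Finset.inf'_le _ (Finset.mem_univ i)
      have hσ00 : (0:ℂ) < σ 0 0 := posDef_diag_entry hσ 0
      have hσ11 : (0:ℂ) < σ 1 1 := posDef_diag_entry hσ 1
      have hst00 : star (σ 0 0) = σ 0 0 := by
        have := congrFun (congrFun hσ.1 0) 0
        simpa [Matrix.conjTranspose_apply] using this
      have hst11 : star (σ 1 1) = σ 1 1 := by
        have := congrFun (congrFun hσ.1 1) 1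
        simpa [Matrix.conjTranspose_apply] using this
      have hσsum : σ 0 0 + σ 1 1 = 1 := by
        rw [← Matrix.trace_fin_two]; exact hσtr
      set d : Fin 2 → ℂ := ![σ 1 1, -(σ 0 0)] with hd
      set y' : Matrix (Fin 2) (Fin 2) ℂ :=
        Matrix.diagonal (fun i => ((μ:ℂ)) * d i) with hy'
      have hy'herm : y'.IsHermitian := by
        rw [hy']
        apply Matrix.isHermitian_diagonal_of_self_adjoint
        funext i
        fin_cases i <;>
          simp [hd, Complex.conj_ofReal, star_mul', hst00, hst11, mul_comm]
      have hy'tr : (σ * y').trace = 0 := by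
        rw [hy']
        simp [Matrix.trace, Matrix.diag, Matrix.mul_diagonal, Fin.sum_univ_two, hd]
        ring
      set bb := b + (1 : Matrix (Fin 2) (Fin 2) ℂ) ⊗ₖ y' with hbb
      have hKron : (1 : Matrix (Fin 2) (Fin 2) ℂ) ⊗ₖ y' =
          Matrix.diagonal (fun p : Fin 2 × Fin 2 => ((μ:ℂ)) * d p.2) := by
        rw [hy', ← Matrix.diagonal_one, Matrix.diagonal_kronecker_diagonal]
        simp
      -- Main positivity
      set V : Matrix (Fin 2 × Fin 2) (Fin 2 × Fin 2) ℂ :=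
        (hA.eigenvectorUnitary : Matrix (Fin 2 × Fin 2) (Fin 2 × Fin 2) ℂ) with hV
      have hspec : b = V * Matrix.diagonal (RCLike.ofReal ∘ hA.eigenvalues) * Vᴴ := by
        rw [hV, ← Matrix.star_eq_conjTranspose]
        exact hA.spectral_theorem
      have hVV : V * Vᴴ = 1 := by
        rw [hV, ← Matrix.star_eq_conjTranspose]
        exact Unitary.coe_mul_star_self _
      have hconst : V * Matrix.diagonal (fun _ : Fin 2 × Fin 2 => ((μ:ℂ))) * Vᴴ =
          Matrix.diagonal (fun _ : Fin 2 × Fin 2 => ((μ:ℂ))) := by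
        have hd1 : Matrix.diagonal (fun _ : Fin 2 × Fin 2 => ((μ:ℂ))) = ((μ:ℂ)) • 1 := by
          ext p q
          by_cases h : p = q
          · subst h; simp
          · simp [Matrix.diagonal_apply_ne _ h, Matrix.one_apply_ne h]
        rw [hd1, Matrix.mul_smul, Matrix.smul_mul, mul_one, hVV]
      set A1 := V * Matrix.diagonal (fun i => ((hA.eigenvalues i - μ : ℝ) : ℂ)) * Vᴴ with hA1
      have hA1psd : A1.PosSemidef := by
        rw [hA1]
        exact (Matrix.posSemidef_diagonal_iff.mpr fun i =>
          Complex.zero_le_real.mpr (sub_nonneg.mpr (hμle i))).mul_mul_conjTranspose_same V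
      set A2 := Matrix.diagonal
          (fun p : Fin 2 × Fin 2 => ((μ:ℂ)) + ((μ:ℂ)) * d p.2) with hA2
      have hA2psd : A2.PosSemidef := by
        rw [hA2]
        refine Matrix.posSemidef_diagonal_iff.mpr fun p => ?_
        obtain ⟨k, i⟩ := p
        have h0μ : (0:ℂ) ≤ (μ:ℂ) := Complex.zero_le_real.mpr hμpos.le
        fin_cases i
        · have hrw : (0:ℂ) ≤ ((μ:ℂ)) + ((μ:ℂ)) * σ 1 1 :=
            add_nonneg h0μ (mul_nonneg h0μ hσ11.le)
          simpa [hd] using hrw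
        · have he : ((μ:ℂ)) + ((μ:ℂ)) * -(σ 0 0) = ((μ:ℂ)) * σ 1 1 := by
            linear_combination (-(μ:ℂ)) * hσsum
          have hrw : (0:ℂ) ≤ ((μ:ℂ)) + ((μ:ℂ)) * -(σ 0 0) := by
            rw [he]
            exact mul_nonneg h0μ hσ11.le
          simpa [hd] using hrw
      have hsum : bb = A1 + A2 := by
        have hmid : A1 + Matrix.diagonal (fun _ : Fin 2 × Fin 2 => ((μ:ℂ))) = b := by
          rw [← hconst, hA1, ← Matrix.add_mul, ← Matrix.mul_add, Matrix.diagonal_add]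
          rw [show (fun i : Fin 2 × Fin 2 => ((hA.eigenvalues i - μ : ℝ) : ℂ) + ((μ:ℂ))) =
              RCLike.ofReal ∘ hA.eigenvalues by
            funext i
            simp only [Function.comp_apply]
            push_cast
            norm_cast
            exact congrArg _ (sub_add_cancel (hA.eigenvalues i) μ)]
          exact hspec.symm
        have hA2split : A2 = Matrix.diagonal (fun _ : Fin 2 × Fin 2 => ((μ:ℂ))) +
            Matrix.diagonal (fun p : Fin 2 × Fin 2 => ((μ:ℂ)) * d p.2) := by
          rw [hA2, ← Matrix.diagonal_add]
        rw [hbb, hKron, hA2split, ← hmid]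
        abel
      have hbbpsd : bb.PosSemidef := by
        rw [hsum]; exact hA1psd.add hA2psd
      have hbbne : bb ≠ b := by
        intro h
        rw [hbb] at h
        have h0 : (1 : Matrix (Fin 2) (Fin 2) ℂ) ⊗ₖ y' = 0 := by
          have := congrArg (fun M => M - b) h
          simpa [add_sub_cancel_left] using this
        rw [hKron] at h0
        have := congrFun (congrFun h0 ((0 : Fin 2), (0 : Fin 2))) ((0 : Fin 2), (0 : Fin 2))
        simp only [Matrix.diagonal_apply_eq, Matrix.zero_apply, hd] at this
        rw [show (![σ 1 1, -(σ 0 0)] : Fin 2 → ℂ) 0 = σ 1 1 by rfl] at this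
        exact (mul_ne_zero (Complex.ofReal_ne_zero.mpr hμpos.ne') hσ11.ne') this
      exact ⟨bb, hbbpsd, hbbne, y', hy'herm, hy'tr, by rw [hbb]; exact add_sub_cancel_left _ _⟩
    · -- y ≠ 0 : then b ≠ a already
      refine ⟨b, hb, ?_, y, hy, htr, hdiff⟩
      intro h
      rw [h, sub_self] at hdiff
      apply hy0
      funext i j
      have := congrFun (congrFun hdiff.symm ((0 : Fin 2), i)) ((0 : Fin 2), j)
      simpa [Matrix.kroneckerMap_apply, Matrix.one_apply] using this
end
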